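/- arXiv:1401.0913 — 8 statements merged into one kernel-verified Lean document; each statement's English description precedes it below -/
import Mathlib

section
/- Let G be a group, k a field, N ≥ 2, and R₁, R₂ : G → GL_N(k) two representations such that R₁ and R₂ agree on the commutator subgroup G' of G, and the restriction of R₂ to G' is absolutely irreducible. Then there exists a group homomorphism (character) η : G → kˣ such that R₂(g) = η(g) • R₁(g) for all g ∈ G. -/
open Matrix

/-!
Put `A g = R₁(g)⁻¹ R₂(g)`. Because `G'` is normal and `R₁ = R₂` on it, conjugating `R₂(c)`,
`c ∈ G'`, by `R₁(g)` or by `R₂(g)` gives the same matrix, so `A g` commutes with `R₂(G')`, hence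
with its span `M_N(k)` (Schur's lemma), and is a scalar matrix `η(g)`. Since the `A g` are
central, `g ↦ A g` is multiplicative, and so is `η`.
-/

theorem MonoidHom.commute_inv_mul_of_eqOn_normal {G M : Type*} [Group G] [Group M]
    {H : Subgroup G} [H.Normal] (f₁ f₂ : G →* M) (hagree : ∀ h ∈ H, f₁ h = f₂ h)
    (g : G) {h : G} (hh : h ∈ H) : Commute (f₂ h) ((f₁ g)⁻¹ * f₂ g) := by
  have hconj : f₁ (g * h * g⁻¹) = f₂ (g * h * g⁻¹) :=
    hagree _ (Subgroup.Normal.conj_mem ‹_› h hh g)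
  simp only [map_mul, map_inv, hagree h hh] at hconj
  calc f₂ h * ((f₁ g)⁻¹ * f₂ g)
      = (f₁ g)⁻¹ * (f₁ g * f₂ h * (f₁ g)⁻¹) * f₂ g := by group
    _ = (f₁ g)⁻¹ * (f₂ g * f₂ h * (f₂ g)⁻¹) * f₂ g := by rw [hconj]
    _ = (f₁ g)⁻¹ * f₂ g * f₂ h := by group

theorem mem_center_of_commute_of_span_eq_top {R A : Type*} [CommSemiring R] [Semiring A]
    [Algebra R A] {S : Set A} (hS : Submodule.span R S = ⊤) {a : A}
    (ha : ∀ s ∈ S, Commute s a) : a ∈ Set.center A := by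
  have hle : Submodule.span R S ≤ Subalgebra.toSubmodule (Subalgebra.centralizer R {a}) :=
    Submodule.span_le.mpr fun s hs ↦
      (Subalgebra.mem_centralizer_iff R).mpr fun b hb ↦ hb ▸ (ha s hs).eq.symm
  rw [hS] at hle
  exact Semigroup.mem_center_iff.mpr fun b ↦
    ((Subalgebra.mem_centralizer_iff R).mp (hle Submodule.mem_top) a rfl).symm

theorem MonoidHom.exists_eq_mul_comp_of_inv_mul_mem_range {G M A : Type*} [Group G] [Group M]
    [Group A] (f₁ f₂ : G →* M) {φ : A →* M} (hφ : Function.Injective φ)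
    (hcentral : φ.range ≤ Subgroup.center M) (hmem : ∀ g, (f₁ g)⁻¹ * f₂ g ∈ φ.range) :
    ∃ η : G →* A, ∀ g, f₂ g = f₁ g * φ (η g) := by
  set χ : G → A := fun g ↦ (MonoidHom.ofInjective hφ).symm ⟨_, hmem g⟩
  have hχ : ∀ g, φ (χ g) = (f₁ g)⁻¹ * f₂ g := fun g ↦
    congrArg Subtype.val ((MonoidHom.ofInjective hφ).apply_symm_apply ⟨_, hmem g⟩)
  refine ⟨MonoidHom.mk' χ fun g h ↦ hφ ?_, fun g ↦ by simp [hχ]⟩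
  have hcomm := Subgroup.mem_center_iff.mp (hcentral (hmem g)) ((f₁ h)⁻¹)
  rw [map_mul, hχ, hχ, hχ, map_mul, map_mul, _root_.mul_inv_rev]
  calc (f₁ h)⁻¹ * (f₁ g)⁻¹ * (f₂ g * f₂ h)
      = (f₁ h)⁻¹ * ((f₁ g)⁻¹ * f₂ g) * f₂ h := by group
    _ = (f₁ g)⁻¹ * f₂ g * ((f₁ h)⁻¹ * f₂ h) := by rw [hcomm]; group

theorem Matrix.GeneralLinearGroup.scalar_injective {n R : Type*} [Fintype n] [DecidableEq n]
    [Nonempty n] [Semiring R] : Function.Injective (GeneralLinearGroup.scalar n : Rˣ →* GL n R) :=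
  Units.map_injective fun _ _ ↦ Matrix.scalar_inj.mp

/-- Let `G` be a group, `k` a field, `N ≥ 2`, and `R₁, R₂ : G → GL_N(k)` two representations
agreeing on the commutator subgroup `G'` of `G`, such that the restriction of `R₂` to `G'` is
absolutely irreducible (its image spans the full matrix algebra `M_N(k)`). Then there is a
character `η : G → kˣ` with `R₂ = R₁ ⊗ η`. -/
theorem stmt_0 (G : Type*) [Group G] (k : Type*) [Field k] (N : ℕ) (hN : 2 ≤ N)
    (R₁ R₂ : G →* GL (Fin N) k)
    (hagree : ∀ g ∈ commutator G, R₁ g = R₂ g)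
    (hirr : Submodule.span k {m : Matrix (Fin N) (Fin N) k |
      ∃ g ∈ commutator G, m = (R₂ g : Matrix (Fin N) (Fin N) k)} = ⊤) :
    ∃ η : G →* kˣ, ∀ g : G,
      (R₂ g : Matrix (Fin N) (Fin N) k) = (η g : k) • (R₁ g : Matrix (Fin N) (Fin N) k) := by
  have : Nonempty (Fin N) := ⟨⟨0, by omega⟩⟩
  have hscalar (g : G) :
      (R₁ g)⁻¹ * R₂ g ∈ (GeneralLinearGroup.scalar (Fin N) : kˣ →* _).range := by
    rw [← GeneralLinearGroup.center_eq_range_scalar,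
      GeneralLinearGroup.mem_center_iff_val_mem_range_scalar, ← Matrix.center_eq_range]
    refine mem_center_of_commute_of_span_eq_top hirr ?_
    rintro _ ⟨c, hc, rfl⟩
    exact Units.ext_iff.mp (R₁.commute_inv_mul_of_eqOn_normal R₂ hagree g hc)
  obtain ⟨η, hη⟩ := R₁.exists_eq_mul_comp_of_inv_mul_mem_range R₂
    GeneralLinearGroup.scalar_injective GeneralLinearGroup.center_eq_range_scalar.ge hscalar
  refine ⟨η, fun g ↦ ?_⟩
  rw [hη g, Units.val_mul, GeneralLinearGroup.coe_scalar, scalar_apply, ← smul_one_eq_diagonal,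
    mul_smul_comm, mul_one]
end

section
/- Let K be a field, V a finite-dimensional K-vector space of dimension r, realized as an r-dimensional linear subspace of K^N. Then there exists a vector v ∈ V having at least r coordinates equal to 1. -/
/-!
If the set `J` of coordinates where `v ∈ V` equals `1` has fewer than `dim V` elements, the
restriction of `V` to the coordinates in `J` has a nonzero kernel vector `w`. Adding a suitable
multiple of `w` to `v` keeps the coordinates in `J` equal to `1` and makes one more coordinate,
where `w` does not vanish, equal to `1`. Starting from `v = 0` and iterating gives the claim.
-/

open Finset

namespace Submodule

variable {K ι : Type*} [Field K]

theorem exists_ne_zero_forall_mem_eq_zero_of_card_lt_finrank (V : Submodule K (ι → K))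
    (s : Finset ι) (hs : #s < Module.finrank K V) :
    ∃ w ∈ V, w ≠ 0 ∧ ∀ i ∈ s, w i = 0 := by
  have : FiniteDimensional K V := Module.finite_of_finrank_pos (by omega)
  let restrict : V →ₗ[K] (s → K) := LinearMap.funLeft K K ((↑) : s → ι) ∘ₗ V.subtype
  have hker : LinearMap.ker restrict ≠ ⊥ :=
    LinearMap.ker_ne_bot_of_finrank_lt (by rwa [Module.finrank_fintype_fun_eq_card,
      Fintype.card_coe])
  obtain ⟨x, hx, hx0⟩ := (Submodule.ne_bot_iff _).mp hker
  refine ⟨x, x.2, fun h => hx0 (Subtype.ext h), fun i hi => ?_⟩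
  exact congrFun (LinearMap.mem_ker.mp hx) ⟨i, hi⟩

variable [Fintype ι] [DecidableEq K]

theorem exists_mem_card_lt_card_filter_eq_one (V : Submodule K (ι → K)) {v : ι → K}
    (hv : v ∈ V) (hlt : #{i | v i = 1} < Module.finrank K V) :
    ∃ u ∈ V, #{i | v i = 1} < #{i | u i = 1} := by
  obtain ⟨w, hw, hw0, hwJ⟩ := V.exists_ne_zero_forall_mem_eq_zero_of_card_lt_finrank _ hlt
  obtain ⟨j, hj⟩ : ∃ j, w j ≠ 0 := Function.ne_iff.mp hw0
  have hjJ : j ∉ ({i | v i = 1} : Finset ι) := fun h => hj (hwJ j h)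
  set u := v + ((1 - v j) / w j) • w
  refine ⟨u, V.add_mem hv (V.smul_mem _ hw), ?_⟩
  have hsub : ({i | v i = 1} : Finset ι) ⊆ ({i | u i = 1} : Finset ι) := fun i hi => by
    simp_all [u]
  refine card_lt_card ((ssubset_iff_of_subset hsub).mpr ⟨j, ?_, hjJ⟩)
  simp [u, hj]

theorem exists_mem_finrank_le_card_filter_eq_one (V : Submodule K (ι → K)) :
    ∃ v ∈ V, Module.finrank K V ≤ #{i | v i = 1} := by
  suffices ∀ k ≤ Module.finrank K V, ∃ v ∈ V, k ≤ #{i | v i = 1} from this _ le_rfl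
  intro k hk
  induction k with
  | zero => exact ⟨0, V.zero_mem, Nat.zero_le _⟩
  | succ k ih =>
    obtain ⟨v, hv, hkv⟩ := ih (by omega)
    by_cases hlt : #{i | v i = 1} < Module.finrank K V
    · obtain ⟨u, hu, hvu⟩ := V.exists_mem_card_lt_card_filter_eq_one hv hlt
      exact ⟨u, hu, by omega⟩
    · exact ⟨v, hv, by omega⟩

end Submodule

open Classical in
/-- Any `r`-dimensional linear subspace of `K^N` contains a vector with at least `r`
coordinates equal to `1`. -/
theorem stmt_4 (K : Type*) [Field K] (N r : ℕ) (V : Submodule K (Fin N → K))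
    (hV : Module.finrank K V = r) :
    ∃ v ∈ V, r ≤ (Finset.univ.filter (fun i : Fin N => v i = 1)).card := by
  subst hV
  exact V.exists_mem_finrank_le_card_filter_eq_one
end

section
/- Let p be a prime and G an elementary abelian p-subgroup of the symmetric group S_N of order p^r. Then G contains a permutation that is a product of at least r disjoint p-cycles. -/
/-!
View `G` as an `𝔽_p`-vector space `V` of dimension `r` acting faithfully on the points. The
stabilizers are subspaces with trivial intersection, so their annihilators span `V^*`; pick a
basis of `V^*` made of such functionals and let `g` be the vector on which all of them equal `1`.
Grouping the basis functionals by the stabilizer `W` they annihilate, at most `codim W` of them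
share `W`, while the points with stabilizer `W` contain an orbit of size
`p ^ codim W ≥ p * codim W`, all moved by `g`. So `g` moves at least `p * r` points, and as
`g ^ p = 1` all its cycles are `p`-cycles.
-/

open Module Finset

section Dual

variable {K V : Type*} [Field K] [AddCommGroup V] [Module K V] [FiniteDimensional K V]

theorem Module.Basis.exists_forall_apply_eq_one {ι : Type*} (b : Basis ι K (Dual K V)) :
    ∃ v : V, ∀ i, b i v = 1 :=
  ⟨(evalEquiv K V).symm (b.constr K fun _ => 1), fun i => by simp⟩

theorem LinearIndependent.card_le_finrank_quotient_of_mem_dualAnnihilator {ι : Type*}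
    [Fintype ι] {f : ι → Dual K V} (hf : LinearIndependent K f) {W : Submodule K V}
    (hW : ∀ i, f i ∈ W.dualAnnihilator) : Fintype.card ι ≤ finrank K (V ⧸ W) := by
  rw [(Subspace.quotEquivAnnihilator W).finrank_eq, ← finrank_span_eq_card hf]
  exact Submodule.finrank_mono (Submodule.span_le.mpr (Set.range_subset_iff.mpr hW))

/-- A form of the paper's lemma that an `r`-dimensional subspace of `K^N` contains a vector with
at least `r` entries equal to `1`. -/
theorem Submodule.exists_notMem_finrank_le_sum_finrank_quotient {ι : Type*} [Finite ι]
    (S : ι → Submodule K V) (hS : ⨅ i, S i = ⊥) :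
    ∃ v : V, ∃ I : Finset (Submodule K V), (∀ W ∈ I, W ∈ Set.range S ∧ v ∉ W) ∧
      finrank K V ≤ ∑ W ∈ I, finrank K (V ⧸ W) := by
  classical
  set t : Set (Dual K V) := ⋃ i, (S i).dualAnnihilator
  have ht : span K t = ⊤ := by
    rw [Submodule.span_iUnion]
    simp_rw [Submodule.span_eq]
    rw [← Subspace.dualAnnihilator_iInf_eq, hS, Submodule.dualAnnihilator_bot]
  obtain ⟨b, hbt, hbspan, hbli⟩ := exists_linearIndependent K t
  let B : Basis b K (Dual K V) := .mk hbli (by rw [Subtype.range_coe, hbspan, ht])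
  have : Fintype b := FiniteDimensional.fintypeBasisIndex B
  choose y hy using fun j : b => Set.mem_iUnion.mp (hbt j.2)
  obtain ⟨v, hv⟩ := B.exists_forall_apply_eq_one
  simp only [B, Basis.coe_mk] at hv
  refine ⟨v, univ.image (S ∘ y), ?_, ?_⟩
  · simp only [mem_image, mem_univ, true_and, Function.comp_apply, forall_exists_index]
    rintro _ j rfl
    refine ⟨⟨y j, rfl⟩, fun hvj => ?_⟩
    simpa [hv] using (Submodule.mem_dualAnnihilator _).mp (hy j) v hvj
  · calc finrank K V = Fintype.card b := by
          rw [← finrank_eq_card_basis B, Subspace.dual_finrank_eq]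
      _ = ∑ W ∈ univ.image (S ∘ y), #{j | S (y j) = W} :=
          card_eq_sum_card_fiberwise fun j _ => mem_image_of_mem _ (mem_univ j)
      _ ≤ _ := sum_le_sum fun W _ => by
          rw [← Fintype.card_subtype]
          exact (hbli.comp _ Subtype.val_injective).card_le_finrank_quotient_of_mem_dualAnnihilator
            fun j => by simpa only [Function.comp_apply, ← j.2, SetLike.mem_coe] using hy j

end Dual

theorem ZMod.natCard_eq_pow_finrank (p : ℕ) [Fact p.Prime] (V : Type*) [AddCommGroup V]
    [Module (ZMod p) V] [Module.Finite (ZMod p) V] : Nat.card V = p ^ finrank (ZMod p) V := by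
  rw [Module.natCard_eq_pow_finrank (K := ZMod p), Nat.card_zmod]

namespace AddAction

variable (p : ℕ) (V : Type*) {X : Type*} [AddCommGroup V] [Module (ZMod p) V] [AddAction V X]

abbrev stabilizerSubmodule (x : X) : Submodule (ZMod p) V :=
  AddSubgroup.toZModSubmodule p (stabilizer V x)

theorem iInf_stabilizerSubmodule_eq_bot [FaithfulVAdd V X] :
    ⨅ x : X, stabilizerSubmodule p V x = ⊥ :=
  (Submodule.eq_bot_iff _).mpr fun v hv => eq_of_vadd_eq_vadd fun x => by
    rw [zero_vadd]
    exact (Submodule.mem_iInf _).mp hv x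

theorem card_orbit_eq_pow_finrank_quotient [Fact p.Prime] [Finite V] (x : X) :
    Nat.card (orbit V x) = p ^ finrank (ZMod p) (V ⧸ stabilizerSubmodule p V x) := by
  rw [Nat.card_coe_set_eq, ← index_stabilizer]
  exact ZMod.natCard_eq_pow_finrank p (V ⧸ stabilizerSubmodule p V x)

theorem pow_finrank_quotient_le_card_stabilizerSubmodule_eq [Fact p.Prime] [Finite V] [Finite X]
    (x : X) :
    p ^ finrank (ZMod p) (V ⧸ stabilizerSubmodule p V x) ≤
      Nat.card {z : X // stabilizerSubmodule p V z = stabilizerSubmodule p V x} := by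
  rw [← card_orbit_eq_pow_finrank_quotient]
  refine Nat.card_mono (Set.toFinite _) ?_
  rintro _ ⟨v, rfl⟩
  exact congrArg (AddSubgroup.toZModSubmodule p) (stabilizer_vadd_eq_right v x)

theorem exists_mul_finrank_le_card_filter_vadd_ne [Fact p.Prime] [Finite V] [Fintype X]
    [DecidableEq X] [FaithfulVAdd V X] :
    ∃ v : V, p * finrank (ZMod p) V ≤ #{x : X | v +ᵥ x ≠ x} := by
  classical
  obtain ⟨v, I, hI, hrank⟩ := Submodule.exists_notMem_finrank_le_sum_finrank_quotient
    (stabilizerSubmodule p V (X := X)) (iInf_stabilizerSubmodule_eq_bot p V)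
  let T (W : Submodule (ZMod p) V) : Finset X := {x | stabilizerSubmodule p V x = W}
  refine ⟨v, ?_⟩
  calc p * finrank (ZMod p) V ≤ ∑ W ∈ I, p * finrank (ZMod p) (V ⧸ W) := by
        rw [← mul_sum]; exact Nat.mul_le_mul_left p hrank
    _ ≤ ∑ W ∈ I, #(T W) := sum_le_sum fun W hW => by
        obtain ⟨⟨x, rfl⟩, -⟩ := hI W hW
        rw [← Fintype.card_subtype, ← Nat.card_eq_fintype_card]
        exact (Nat.mul_le_pow (Fact.out : p.Prime).ne_one _).trans
          (pow_finrank_quotient_le_card_stabilizerSubmodule_eq p V x)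
    _ = #(I.biUnion T) := (card_biUnion fun W₁ _ W₂ _ hne =>
        disjoint_filter.mpr fun x _ h₁ h₂ => hne (h₁ ▸ h₂)).symm
    _ ≤ #{x : X | v +ᵥ x ≠ x} := card_le_card <| biUnion_subset.mpr fun W hW x hx => by
        rw [mem_filter] at hx ⊢
        exact ⟨mem_univ x, fun hvx => (hI W hW).2 (hx.2 ▸ hvx)⟩

end AddAction

theorem Equiv.Perm.card_support_eq_mul_count_cycleType {α : Type*} [Fintype α] [DecidableEq α]
    {p : ℕ} [Fact p.Prime] {σ : Perm α} (hσ : σ ^ p = 1) :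
    #σ.support = p * σ.cycleType.count p := by
  rw [← sum_cycleType, cycleType_of_pow_prime_eq_one hσ, Multiset.sum_replicate,
    Multiset.count_replicate_self, smul_eq_mul, mul_comm]

/-- An elementary abelian `p`-subgroup of order `p^r` of a symmetric group contains an
element which is a product of at least `r` disjoint `p`-cycles (i.e. whose cycle type
contains `p` with multiplicity at least `r`). -/
theorem stmt_5 (p : ℕ) (hp : p.Prime) (N r : ℕ) (G : Subgroup (Equiv.Perm (Fin N)))
    (hab : ∀ g h : G, g * h = h * g)
    (hexp : ∀ g : G, g ^ p = 1)
    (hcard : Nat.card G = p ^ r) :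
    ∃ g ∈ G, r ≤ Multiset.count p (Equiv.Perm.cycleType g) := by
  open scoped IsMulCommutative in
  have : Fact p.Prime := ⟨hp⟩
  have : IsMulCommutative G := ⟨⟨hab⟩⟩
  have : Module (ZMod p) (Additive ↥G) := AddCommGroup.zmodModule fun g => by
    rw [← ofMul_toMul g, ← ofMul_pow, hexp, ofMul_one]
  have : FaithfulVAdd (Additive ↥G) (Fin N) := ⟨fun h => Subtype.ext (Equiv.ext h)⟩
  have hrank : finrank (ZMod p) (Additive ↥G) = r :=
    Nat.pow_right_injective hp.two_le
      ((ZMod.natCard_eq_pow_finrank p (Additive ↥G)).symm.trans hcard)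
  obtain ⟨g, hg⟩ :=
    AddAction.exists_mul_finrank_le_card_filter_vadd_ne p (Additive ↥G) (X := Fin N)
  refine ⟨g.toMul, g.toMul.2, Nat.le_of_mul_le_mul_left ?_ hp.pos⟩
  rw [← hrank, ← Equiv.Perm.card_support_eq_mul_count_cycleType (congrArg Subtype.val (hexp _))]
  exact hg
end

section
/- Let 𝔽 be an algebraically closed field of characteristic p > 0, d ≥ 6, and G ⊆ GL_d(𝔽) a subgroup containing an element conjugate to diag(ζ, ζ⁻¹, 1, 1, …, 1) with ζ² ≠ 1 and of order prime to p. Then G is tensor-indecomposable: G is not conjugate into the image of GL_a(𝔽) × GL_b(𝔽) → GL_d(𝔽), (x,y) ↦ x ⊗ y, for any factorization d = ab with a, b ≥ 2. -/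
open Matrix Polynomial Module Finset

section Helpers


variable {R : Type*} [CommRing R] {n m : Type*} [DecidableEq n] [Fintype n] [DecidableEq m] [Fintype m]

lemma my_kron_pow (A : Matrix n n R) (B : Matrix m m R) (r : ℕ) :
    (kroneckerMap (· * ·) A B) ^ r = kroneckerMap (· * ·) (A ^ r) (B ^ r) := by
  induction r with
  | zero => simp [Matrix.one_kronecker_one (α := R)]
  | succ k ih => rw [pow_succ, pow_succ, pow_succ, ih, ← Matrix.mul_kronecker_mul]

lemma my_charpoly_units_conj (u : (Matrix n n R)ˣ) (A : Matrix n n R) :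
    ((u : Matrix n n R) * A * ((u⁻¹ : (Matrix n n R)ˣ) : Matrix n n R)).charpoly = A.charpoly := by
  let φ : Matrix n n R →+* Matrix n n R[X] := (C : R →+* R[X]).mapMatrix
  let u' : (Matrix n n R[X])ˣ := Units.map φ.toMonoidHom u
  have hch : charmatrix ((u : Matrix n n R) * A * ((u⁻¹ : (Matrix n n R)ˣ) : Matrix n n R)) =
      (u' : Matrix n n R[X]) * charmatrix A * ((u'⁻¹ : (Matrix n n R[X])ˣ) : Matrix n n R[X]) := by
    have h1 : ((u'⁻¹ : (Matrix n n R[X])ˣ) : Matrix n n R[X]) = φ ((u⁻¹ : (Matrix n n R)ˣ) : Matrix n n R) := rfl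
    have h2 : ((u' : (Matrix n n R[X]))) = φ (u : Matrix n n R) := rfl
    have hinv : φ (u : Matrix n n R) * φ ((u⁻¹ : (Matrix n n R)ˣ) : Matrix n n R) = 1 := by
      rw [← _root_.map_mul φ, Units.mul_inv, _root_.map_one φ]
    have hc : Matrix.scalar n (X : R[X]) * φ ((u⁻¹ : (Matrix n n R)ˣ) : Matrix n n R)
        = φ ((u⁻¹ : (Matrix n n R)ˣ) : Matrix n n R) * Matrix.scalar n (X : R[X]) :=
      (scalar_commute _ (fun q => Commute.all _ q) _).eq
    rw [charmatrix, charmatrix, h1, h2, mul_sub, sub_mul]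
    congr 1
    · rw [mul_assoc, hc, ← mul_assoc, hinv, one_mul]
    · simp only [RingHom.mapMatrix_apply, Matrix.map_mul, φ]
  rw [Matrix.charpoly, hch, Matrix.det_units_conj, Matrix.charpoly]

lemma my_charpoly_diagonal (v : n → R) : (diagonal v).charpoly = ∏ i, (X - C (v i)) := by
  have h : charmatrix (diagonal v) = diagonal (fun i => X - C (v i)) := by
    ext i j
    by_cases h : i = j
    · subst h; simp
    · simp [h, charmatrix_apply_ne _ _ _ h, diagonal_apply_ne _ h]
  rw [Matrix.charpoly, h, det_diagonal]

end Helpers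

section Helpers2
variable {F : Type*} [Field F] [IsAlgClosed F]

lemma my_diagonalizable {n : ℕ} (A : Matrix (Fin n) (Fin n) F) (r : ℕ) (c : F)
    (hrF : (r : F) ≠ 0) (hc : c ≠ 0) (hA : A ^ r = c • (1 : Matrix (Fin n) (Fin n) F)) :
    ∃ (P : (Matrix (Fin n) (Fin n) F)ˣ) (v : Fin n → F),
      A = (P : Matrix (Fin n) (Fin n) F) * diagonal v * ((P⁻¹ : (Matrix (Fin n) (Fin n) F)ˣ) : Matrix (Fin n) (Fin n) F) := by
  classical
  set f : Module.End F (Fin n → F) := Matrix.toLinAlgEquiv' A with hf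
  have hsq : Squarefree ((X : F[X]) ^ r - C c) :=
    (Polynomial.separable_X_pow_sub_C c hrF hc).squarefree
  have haev : aeval f ((X : F[X]) ^ r - C c) = 0 := by
    have hfr : f ^ r = c • (1 : Module.End F (Fin n → F)) := by
      rw [hf, ← map_pow, hA]
      simp
    rw [map_sub, map_pow, aeval_X, aeval_C, hfr, Algebra.algebraMap_eq_smul_one, sub_self]
  have hss : f.IsSemisimple := Module.End.isSemisimple_of_squarefree_aeval_eq_zero hsq haev
  have hsup : ⨆ μ : F, f.eigenspace μ = ⊤ := by
    have h1 := Module.End.iSup_maxGenEigenspace_eq_top f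
    have h2 : ∀ μ : F, f.maxGenEigenspace μ = f.eigenspace μ :=
      fun μ => hss.isFinitelySemisimple.maxGenEigenspace_eq_eigenspace μ
    simpa [h2] using h1
  have hInt : DirectSum.IsInternal f.eigenspace :=
    (DirectSum.isInternal_submodule_iff_iSupIndep_and_iSup_eq_top _).mpr
      ⟨f.eigenspaces_iSupIndep, hsup⟩
  let bases : ∀ μ : F, Basis (Fin (Module.finrank F (f.eigenspace μ))) F (f.eigenspace μ) :=
    fun μ => Module.finBasis F _
  let b0 : Basis (Σ μ : F, Fin (Module.finrank F (f.eigenspace μ))) F (Fin n → F) :=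
    hInt.collectedBasis bases
  have hmem : ∀ s, b0 s ∈ f.eigenspace s.1 := fun s => hInt.collectedBasis_mem bases s
  let eqv : (Σ μ : F, Fin (Module.finrank F (f.eigenspace μ))) ≃ Fin n :=
    b0.indexEquiv (Pi.basisFun F (Fin n))
  let b : Basis (Fin n) F (Fin n → F) := b0.reindex eqv
  let ev : Fin n → F := fun j => (eqv.symm j).1
  have hb : ∀ j, f (b j) = ev j • b j := by
    intro j
    have : b j = b0 (eqv.symm j) := b0.reindex_apply eqv j
    rw [this]
    exact Module.End.mem_eigenspace_iff.mp (hmem (eqv.symm j))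
  let P : Matrix (Fin n) (Fin n) F := (Pi.basisFun F (Fin n)).toMatrix ⇑b
  have : Invertible P := (Pi.basisFun F (Fin n)).invertibleToMatrix b
  let Pu : (Matrix (Fin n) (Fin n) F)ˣ := unitOfInvertible P
  have hAP : A * P = P * diagonal ev := by
    ext i j
    have hcol : ∀ i, P i j = b j i := by
      intro i; simp [P, Basis.toMatrix_apply, Pi.basisFun_repr]
    have hf2 : A *ᵥ (b j) = ev j • (b j) := by
      have := hb j
      simpa [f, Matrix.toLinAlgEquiv'_apply, Matrix.toLin'_apply] using this
    calc (A * P) i j = (A *ᵥ (b j)) i := by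
          simp [Matrix.mul_apply, Matrix.mulVec, dotProduct, hcol]
      _ = ev j * b j i := by rw [hf2]; rfl
      _ = (P * diagonal ev) i j := by
          rw [Matrix.mul_diagonal, hcol, mul_comm]
  refine ⟨Pu, ev, ?_⟩
  have hPuv : (Pu : Matrix (Fin n) (Fin n) F) = P := rfl
  have h4 : (Pu : Matrix (Fin n) (Fin n) F) * ((Pu⁻¹ : (Matrix (Fin n) (Fin n) F)ˣ) : Matrix (Fin n) (Fin n) F) = 1 := Pu.mul_inv
  calc A = A * P * ((Pu⁻¹ : (Matrix (Fin n) (Fin n) F)ˣ) : Matrix (Fin n) (Fin n) F) := by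
        rw [← hPuv, mul_assoc, h4, mul_one]
    _ = (Pu : Matrix (Fin n) (Fin n) F) * diagonal ev * ((Pu⁻¹ : (Matrix (Fin n) (Fin n) F)ˣ) : Matrix (Fin n) (Fin n) F) := by rw [hAP, hPuv]

end Helpers2

section Helpers3
variable {F : Type*} [Field F]

lemma my_kron_scalar {a b : ℕ} (ha : 0 < a) (hb : 0 < b)
    (A : Matrix (Fin a) (Fin a) F) (B : Matrix (Fin b) (Fin b) F)
    (h : kroneckerMap (· * ·) A B = 1) :
    ∃ c : F, c ≠ 0 ∧ A = c • 1 ∧ B = c⁻¹ • 1 := by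
  have hentry : ∀ (i k : Fin a) (j l : Fin b),
      A i k * B j l = if i = k ∧ j = l then 1 else 0 := by
    intro i k j l
    have := congrFun (congrFun h (i, j)) (k, l)
    rw [kroneckerMap_apply] at this
    rw [this, Matrix.one_apply]
    simp [Prod.ext_iff]
  set i0 : Fin a := ⟨0, ha⟩
  set j0 : Fin b := ⟨0, hb⟩
  have h1 : A i0 i0 * B j0 j0 = 1 := by simpa using hentry i0 i0 j0 j0
  set c : F := A i0 i0 with hcdef
  have hc0 : c ≠ 0 := left_ne_zero_of_mul_eq_one h1
  have hβ : B j0 j0 ≠ 0 := right_ne_zero_of_mul_eq_one h1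
  refine ⟨c, hc0, ?_, ?_⟩
  · ext i k
    have h2 : A i k * B j0 j0 = if i = k then 1 else 0 := by
      simpa using hentry i k j0 j0
    have h3 : c * B j0 j0 = 1 := h1
    have : A i k * (c * B j0 j0) = (if i = k then 1 else 0) * c := by
      rw [mul_comm c (B j0 j0), ← mul_assoc, h2]
    rw [h3, mul_one] at this
    rw [this, Matrix.smul_apply, Matrix.one_apply]
    split <;> simp
  · ext j l
    have h2 : c * B j l = if j = l then 1 else 0 := by
      simpa using hentry i0 i0 j l
    have : B j l = c⁻¹ * (if j = l then 1 else 0) := by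
      field_simp
      rw [mul_comm] at h2
      rw [h2]
    rw [this, Matrix.smul_apply, Matrix.one_apply]
    split <;> simp

lemma my_prod_eq_multiset {ι κ : Type*} [Fintype ι] [Fintype κ] (u : ι → F) (v : κ → F)
    (h : ∏ i, (X - C (u i)) = ∏ j, (X - C (v j))) :
    (Finset.univ.val.map u : Multiset F) = Finset.univ.val.map v := by
  have hu : ∏ i, (X - C (u i)) = ((Finset.univ.val.map u).map (fun z => X - C z)).prod := by
    rw [Multiset.map_map]
    rfl
  have hv : ∏ j, (X - C (v j)) = ((Finset.univ.val.map v).map (fun z => X - C z)).prod := by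
    rw [Multiset.map_map]
    rfl
  have := congrArg Polynomial.roots (hu ▸ hv ▸ h)
  rwa [Polynomial.roots_multiset_prod_X_sub_C, Polynomial.roots_multiset_prod_X_sub_C] at this

end Helpers3

section Helpers4
variable {F : Type*} [Field F] [DecidableEq F]

lemma my_card_filter_eq {ι κ : Type*} [Fintype ι] [Fintype κ] (u : ι → F) (v : κ → F)
    (h : (Finset.univ.val.map u : Multiset F) = Finset.univ.val.map v)
    (P : F → Prop) [DecidablePred P] :
    (Finset.univ.filter (fun i => P (u i))).card = (Finset.univ.filter (fun j => P (v j))).card := by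
  have := congrArg (Multiset.countP P) h
  rw [Multiset.countP_map, Multiset.countP_map] at this
  rw [Finset.card_def, Finset.card_def, Finset.filter_val, Finset.filter_val,
    ← Multiset.countP_eq_card_filter, ← Multiset.countP_eq_card_filter,
    Multiset.countP_eq_card_filter, Multiset.countP_eq_card_filter]
  exact this

lemma my_combo {a b : ℕ} (ha : 2 ≤ a) (hb : 2 ≤ b) (hd : 6 ≤ a * b)
    (v₁ : Fin a → F) (v₂ : Fin b → F) (z : F)
    (hz : (Finset.univ.filter (fun p : Fin a × Fin b => v₁ p.1 * v₂ p.2 = z)).card = 1)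
    (hne : (Finset.univ.filter (fun p : Fin a × Fin b => v₁ p.1 * v₂ p.2 ≠ 1)).card = 2) :
    False := by
  classical
  by_cases h1 : ∃ i₀, ∀ j, v₁ i₀ * v₂ j = 1
  · obtain ⟨i₀, hi⟩ := h1
    have hv2 : ∀ j, v₂ j = (v₁ i₀)⁻¹ := fun j => eq_inv_of_mul_eq_one_right (hi j)
    have hset : (Finset.univ.filter (fun p : Fin a × Fin b => v₁ p.1 * v₂ p.2 = z)) =
        (Finset.univ.filter (fun i : Fin a => v₁ i * (v₁ i₀)⁻¹ = z)) ×ˢ Finset.univ := by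
      ext ⟨i, j⟩
      simp [hv2]
    rw [hset, Finset.card_product, Finset.card_univ, Fintype.card_fin] at hz
    have := Nat.eq_one_of_mul_eq_one_left hz
    omega
  · by_cases h2 : ∃ j₀, ∀ i, v₁ i * v₂ j₀ = 1
    · obtain ⟨j₀, hj⟩ := h2
      have hv1 : ∀ i, v₁ i = (v₂ j₀)⁻¹ := fun i => eq_inv_of_mul_eq_one_left (hj i)
      have hset : (Finset.univ.filter (fun p : Fin a × Fin b => v₁ p.1 * v₂ p.2 = z)) =
          Finset.univ ×ˢ (Finset.univ.filter (fun j : Fin b => (v₂ j₀)⁻¹ * v₂ j = z)) := by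
        ext ⟨i, j⟩
        simp [hv1]
      rw [hset, Finset.card_product, Finset.card_univ, Fintype.card_fin] at hz
      have := Nat.eq_one_of_mul_eq_one_right hz
      omega
    · push_neg at h1 h2
      have hA : a ≤ 2 := by
        have hinj : Set.InjOn (fun i : Fin a => ((i, (h1 i).choose) : Fin a × Fin b))
            ↑(Finset.univ : Finset (Fin a)) := by
          intro i _ k _ hik
          exact (Prod.ext_iff.mp hik).1
        have hmaps : ∀ i ∈ (Finset.univ : Finset (Fin a)),
            ((i, (h1 i).choose) : Fin a × Fin b) ∈
              (Finset.univ.filter (fun p : Fin a × Fin b => v₁ p.1 * v₂ p.2 ≠ 1)) := by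
          intro i _
          simp [(h1 i).choose_spec]
        have := Finset.card_le_card_of_injOn _ hmaps hinj
        rwa [Finset.card_univ, Fintype.card_fin, hne] at this
      have hB : b ≤ 2 := by
        have hinj : Set.InjOn (fun j : Fin b => (((h2 j).choose, j) : Fin a × Fin b))
            ↑(Finset.univ : Finset (Fin b)) := by
          intro i _ k _ hik
          exact (Prod.ext_iff.mp hik).2
        have hmaps : ∀ j ∈ (Finset.univ : Finset (Fin b)),
            (((h2 j).choose, j) : Fin a × Fin b) ∈
              (Finset.univ.filter (fun p : Fin a × Fin b => v₁ p.1 * v₂ p.2 ≠ 1)) := by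
          intro j _
          simp [(h2 j).choose_spec]
        have := Finset.card_le_card_of_injOn _ hmaps hinj
        rwa [Finset.card_univ, Fintype.card_fin, hne] at this
      have := Nat.mul_le_mul hA hB
      omega

end Helpers4

/-- Let `𝔽` be algebraically closed of characteristic `p > 0`, `d ≥ 6`, and
`G ≤ GL_d(𝔽)` containing an element of order prime to `p` conjugate to
`diag(ζ, ζ⁻¹, 1, …, 1)` with `ζ² ≠ 1`. Then `G` is tensor-indecomposable: it is not
conjugate into the image of a Kronecker product subgroup `GL_a ⊗ GL_b` with
`d = ab`, `a, b ≥ 2`. -/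
theorem stmt_6 (F : Type*) [Field F] [IsAlgClosed F] (p : ℕ) [Fact p.Prime] [CharP F p]
    (d : ℕ) (hd : 6 ≤ d) (G : Subgroup (GL (Fin d) F)) (ζ : Fˣ) (hζ : ζ ^ 2 ≠ 1)
    (hg : ∃ g ∈ G, (orderOf g).Coprime p ∧ ∃ y : GL (Fin d) F,
      ((y * g * y⁻¹ : GL (Fin d) F) : Matrix (Fin d) (Fin d) F) =
        Matrix.diagonal (fun i : Fin d =>
          if (i : ℕ) = 0 then (ζ : F) else if (i : ℕ) = 1 then ((ζ⁻¹ : Fˣ) : F) else 1)) :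
    ¬ ∃ (a b : ℕ), 2 ≤ a ∧ 2 ≤ b ∧ a * b = d ∧
        ∃ (e : Fin a × Fin b ≃ Fin d) (x : GL (Fin d) F),
          ∀ g ∈ G, ∃ (g₁ : Matrix (Fin a) (Fin a) F) (g₂ : Matrix (Fin b) (Fin b) F),
            ((x * g * x⁻¹ : GL (Fin d) F) : Matrix (Fin d) (Fin d) F) =
              Matrix.reindex e e (Matrix.kroneckerMap (· * ·) g₁ g₂) := by
  classical
  rintro ⟨a, b, ha, hb, hab, e, x, hx⟩
  obtain ⟨g, hgG, hcop, y, hy⟩ := hg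
  obtain ⟨g₁, g₂, hM⟩ := hx g hgG
  set z : F := (ζ : F) with hzdef
  set zi : F := ((ζ⁻¹ : Fˣ) : F) with hzidef
  have hz1 : z ≠ 1 := by
    intro h
    apply hζ
    have h2 : ζ = 1 := Units.ext (by rw [Units.val_one]; exact h)
    rw [h2, one_pow]
  have hzi1 : zi ≠ 1 := by
    intro h
    apply hζ
    have h2 : (ζ⁻¹ : Fˣ) = 1 := Units.ext (by rw [Units.val_one]; exact h)
    have h3 : ζ = 1 := by rwa [inv_eq_one] at h2
    rw [h3, one_pow]
  have hzzi : zi ≠ z := by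
    intro h
    apply hζ
    have h2 : (ζ⁻¹ : Fˣ) = ζ := Units.ext h
    have h3 : ζ * ζ = 1 := by
      nth_rewrite 1 [← h2]
      exact inv_mul_cancel ζ
    rw [sq]
    exact h3
  set dvec : Fin d → F := fun i : Fin d =>
    if (i : ℕ) = 0 then z else if (i : ℕ) = 1 then zi else 1 with hdvec
  set r : ℕ := orderOf g with hrdef
  have hp : p.Prime := Fact.out
  have hr0 : r ≠ 0 := by
    intro h
    have h2 : Nat.Coprime 0 p := by rw [← h]; exact hcop
    exact hp.one_lt.ne' ((Nat.coprime_zero_left p).mp h2)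
  have hrF : (r : F) ≠ 0 := by
    intro h
    have hdvd : p ∣ r := (CharP.cast_eq_zero_iff F p r).mp h
    exact (hp.coprime_iff_not_dvd.mp hcop.symm) hdvd
  have hgr : g ^ r = 1 := pow_orderOf_eq_one g
  set K : Matrix (Fin a × Fin b) (Fin a × Fin b) F := kroneckerMap (· * ·) g₁ g₂ with hK
  have hpow : K ^ r = 1 := by
    have h1 : (x * g * x⁻¹ : GL (Fin d) F) ^ r = 1 := by
      calc (x * g * x⁻¹ : GL (Fin d) F) ^ r = (MulAut.conj x g) ^ r := by rw [MulAut.conj_apply]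
        _ = MulAut.conj x (g ^ r) := (map_pow _ _ _).symm
        _ = 1 := by rw [hgr, _root_.map_one]
    have h2 : (reindex e e K) ^ r = 1 := by
      rw [← hM, ← Units.val_pow_eq_pow_val, h1, Units.val_one]
    apply (reindexAlgEquiv F F e).injective
    rw [map_pow, _root_.map_one, reindexAlgEquiv_apply]
    exact h2
  have hKr : kroneckerMap (· * ·) (g₁ ^ r) (g₂ ^ r) = (1 : Matrix (Fin a × Fin b) (Fin a × Fin b) F) := by
    rw [← my_kron_pow]
    exact hpow
  have ha0 : 0 < a := by omega
  have hb0 : 0 < b := by omega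
  obtain ⟨c, hc0, hc1, hc2⟩ := my_kron_scalar ha0 hb0 (g₁ ^ r) (g₂ ^ r) hKr
  obtain ⟨P, v₁, hP⟩ := my_diagonalizable g₁ r c hrF hc0 hc1
  obtain ⟨Q, v₂, hQ⟩ := my_diagonalizable g₂ r c⁻¹ hrF (inv_ne_zero hc0) hc2
  set w : Fin a × Fin b → F := fun q => v₁ q.1 * v₂ q.2 with hw
  have hRmul : kroneckerMap (· * ·) (P : Matrix (Fin a) (Fin a) F) (Q : Matrix (Fin b) (Fin b) F) *
      kroneckerMap (· * ·) ((P⁻¹ : (Matrix (Fin a) (Fin a) F)ˣ) : Matrix (Fin a) (Fin a) F)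
        ((Q⁻¹ : (Matrix (Fin b) (Fin b) F)ˣ) : Matrix (Fin b) (Fin b) F) = 1 := by
    rw [← Matrix.mul_kronecker_mul, Units.mul_inv, Units.mul_inv, Matrix.one_kronecker_one]
  have hRmul' : kroneckerMap (· * ·) ((P⁻¹ : (Matrix (Fin a) (Fin a) F)ˣ) : Matrix (Fin a) (Fin a) F)
      ((Q⁻¹ : (Matrix (Fin b) (Fin b) F)ˣ) : Matrix (Fin b) (Fin b) F) *
      kroneckerMap (· * ·) (P : Matrix (Fin a) (Fin a) F) (Q : Matrix (Fin b) (Fin b) F) = 1 := by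
    rw [← Matrix.mul_kronecker_mul, Units.inv_mul, Units.inv_mul, Matrix.one_kronecker_one]
  set Ru : (Matrix (Fin a × Fin b) (Fin a × Fin b) F)ˣ :=
    ⟨kroneckerMap (· * ·) (P : Matrix (Fin a) (Fin a) F) (Q : Matrix (Fin b) (Fin b) F),
     kroneckerMap (· * ·) ((P⁻¹ : (Matrix (Fin a) (Fin a) F)ˣ) : Matrix (Fin a) (Fin a) F)
       ((Q⁻¹ : (Matrix (Fin b) (Fin b) F)ˣ) : Matrix (Fin b) (Fin b) F), hRmul, hRmul'⟩ with hRu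
  have hKfact : K = (Ru : Matrix (Fin a × Fin b) (Fin a × Fin b) F) * diagonal w *
      ((Ru⁻¹ : (Matrix (Fin a × Fin b) (Fin a × Fin b) F)ˣ) : Matrix (Fin a × Fin b) (Fin a × Fin b) F) := by
    have hval : (Ru : Matrix (Fin a × Fin b) (Fin a × Fin b) F) =
        kroneckerMap (· * ·) (P : Matrix (Fin a) (Fin a) F) (Q : Matrix (Fin b) (Fin b) F) := rfl
    have hvalinv : ((Ru⁻¹ : (Matrix (Fin a × Fin b) (Fin a × Fin b) F)ˣ) : Matrix (Fin a × Fin b) (Fin a × Fin b) F) =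
        kroneckerMap (· * ·) ((P⁻¹ : (Matrix (Fin a) (Fin a) F)ˣ) : Matrix (Fin a) (Fin a) F)
          ((Q⁻¹ : (Matrix (Fin b) (Fin b) F)ˣ) : Matrix (Fin b) (Fin b) F) := rfl
    rw [hK, hP, hQ, hval, hvalinv]
    rw [show diagonal w = kroneckerMap (· * ·) (diagonal v₁) (diagonal v₂) from
      (Matrix.diagonal_kronecker_diagonal v₁ v₂).symm]
    rw [← Matrix.mul_kronecker_mul, ← Matrix.mul_kronecker_mul]
  have hcharK : K.charpoly = (diagonal w).charpoly := by
    rw [hKfact]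
    exact my_charpoly_units_conj Ru _
  have hcharD : (diagonal dvec).charpoly = Matrix.charpoly (g : Matrix (Fin d) (Fin d) F) := by
    rw [← hy]
    exact my_charpoly_units_conj y (g : Matrix (Fin d) (Fin d) F)
  have hcharX : K.charpoly = Matrix.charpoly (g : Matrix (Fin d) (Fin d) F) := by
    rw [← Matrix.charpoly_reindex e K, ← hM]
    exact my_charpoly_units_conj x (g : Matrix (Fin d) (Fin d) F)
  have hchar : (diagonal dvec).charpoly = (diagonal w).charpoly := by
    rw [hcharD, ← hcharX, hcharK]
  rw [my_charpoly_diagonal, my_charpoly_diagonal] at hchar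
  have hmult := my_prod_eq_multiset dvec w hchar
  have hcount := fun (Pr : F → Prop) (inst : DecidablePred Pr) =>
    @my_card_filter_eq F _ _ _ _ _ _ w dvec hmult.symm Pr inst
  have h0d : (0 : ℕ) < d := by omega
  have h1d : (1 : ℕ) < d := by omega
  have hzcard : (Finset.univ.filter (fun i : Fin d => dvec i = z)).card = 1 := by
    have hset : Finset.univ.filter (fun i : Fin d => dvec i = z) = {(⟨0, h0d⟩ : Fin d)} := by
      ext i
      simp only [Finset.mem_filter, Finset.mem_univ, true_and, Finset.mem_singleton, hdvec]
      constructor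
      · intro h
        split_ifs at h with h0 h1
        · exact Fin.ext h0
        · exact absurd h hzzi
        · exact absurd h.symm hz1
      · intro h
        subst h
        simp
    rw [hset, Finset.card_singleton]
  have hnecard : (Finset.univ.filter (fun i : Fin d => dvec i ≠ 1)).card = 2 := by
    have hset : Finset.univ.filter (fun i : Fin d => dvec i ≠ 1) =
        {(⟨0, h0d⟩ : Fin d), (⟨1, h1d⟩ : Fin d)} := by
      ext i
      simp only [Finset.mem_filter, Finset.mem_univ, true_and, Finset.mem_insert,
        Finset.mem_singleton, hdvec]
      constructor
      · intro h
        split_ifs at h with h0 h1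
        · exact Or.inl (Fin.ext h0)
        · exact Or.inr (Fin.ext h1)
        · exact absurd rfl h
      · rintro (h | h) <;> subst h <;> simp [hz1, hzi1]
    rw [hset]
    rw [Finset.card_insert_of_notMem (by simp [Fin.ext_iff]), Finset.card_singleton]
  have hzw : (Finset.univ.filter (fun q : Fin a × Fin b => v₁ q.1 * v₂ q.2 = z)).card = 1 := by
    have := hcount (fun t => t = z) (fun t => inferInstance)
    rw [hzcard] at this
    exact this
  have hnew : (Finset.univ.filter (fun q : Fin a × Fin b => v₁ q.1 * v₂ q.2 ≠ 1)).card = 2 := by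
    have := hcount (fun t => t ≠ 1) (fun t => inferInstance)
    rw [hnecard] at this
    exact this
  exact my_combo ha hb (by omega) v₁ v₂ z hzw hnew
end

section
/- Let 𝔽 be an algebraically closed field of characteristic p > 0, d ≥ 16, and G ⊆ GL_d(𝔽) containing an element of order prime to p conjugate to diag(ζ, ζ, ζ⁻¹, ζ⁻¹, 1, …, 1) with ζ² ≠ 1. If G is conjugate into the tensor product subgroup GL_a(𝔽) ⊗ GL_b(𝔽) with d = ab, then min(a,b) ≤ 2. -/
open Matrix

namespace Stmt7Aux

variable {F : Type*} [Field F]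

section vk

variable {na nb : Type*}

/-- Kronecker product of two vectors. -/
def vk (u : na → F) (v : nb → F) : na × nb → F := fun p => u p.1 * v p.2

lemma vk_eq_zero_left {u : na → F} {v : nb → F} (h : vk u v = 0) (hv : v ≠ 0) : u = 0 := by
  obtain ⟨l, hl⟩ : ∃ l, v l ≠ 0 := by
    by_contra hc; push_neg at hc; exact hv (funext hc)
  funext k
  have h2 := congrFun h (k, l)
  simp only [vk, Pi.zero_apply] at h2
  rcases mul_eq_zero.mp h2 with h' | h'
  · exact h'
  · exact absurd h' hl

lemma vk_eq_zero_right {u : na → F} {v : nb → F} (h : vk u v = 0) (hu : u ≠ 0) : v = 0 := by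
  obtain ⟨k, hk⟩ : ∃ k, u k ≠ 0 := by
    by_contra hc; push_neg at hc; exact hu (funext hc)
  funext l
  have h2 := congrFun h (k, l)
  simp only [vk, Pi.zero_apply] at h2
  rcases mul_eq_zero.mp h2 with h' | h'
  · exact absurd h' hk
  · exact h'

lemma vk_ne_zero {u : na → F} {v : nb → F} (hu : u ≠ 0) (hv : v ≠ 0) : vk u v ≠ 0 :=
  fun h => hu (vk_eq_zero_left h hv)

lemma vk_smul_left (c : F) (u : na → F) (v : nb → F) : vk (c • u) v = c • vk u v := by
  funext p; simp [vk]; ring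

lemma vk_smul_right (c : F) (u : na → F) (v : nb → F) : vk u (c • v) = c • vk u v := by
  funext p; simp [vk]; ring

lemma vk_sub_left (u u' : na → F) (v : nb → F) : vk (u - u') v = vk u v - vk u' v := by
  funext p; simp [vk]; ring

lemma vk_sub_right (u : na → F) (v v' : nb → F) : vk u (v - v') = vk u v - vk u v' := by
  funext p; simp [vk]; ring

variable [Fintype na] [Fintype nb]

lemma mulVec_vk (A : Matrix na na F) (B : Matrix nb nb F) (u : na → F) (v : nb → F) :
    (kroneckerMap (· * ·) A B).mulVec (vk u v) = vk (A.mulVec u) (B.mulVec v) := by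
  funext p
  simp only [mulVec, dotProduct, vk, kroneckerMap_apply]
  rw [Fintype.sum_prod_type, Finset.sum_mul_sum]
  exact Finset.sum_congr rfl fun k _ => Finset.sum_congr rfl fun l _ => by ring

end vk

section nu

variable {n : Type*} [Fintype n]

/-- dimension of the kernel of a square matrix -/
noncomputable def nu (M : Matrix n n F) : ℕ :=
  Module.finrank F (LinearMap.ker M.mulVecLin)

lemma nu_add_rank (M : Matrix n n F) : M.rank + nu M = Fintype.card n := by
  rw [Matrix.rank, nu, LinearMap.finrank_range_add_finrank_ker,
    Module.finrank_fintype_fun_eq_card]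

lemma rank_conj [DecidableEq n] (z : GL n F) (M : Matrix n n F) :
    ((z : Matrix n n F) * M * ((z⁻¹ : GL n F) : Matrix n n F)).rank = M.rank := by
  classical
  have h1 : IsUnit ((z : Matrix n n F)).det :=
    (Matrix.isUnit_iff_isUnit_det _).mp ⟨z, rfl⟩
  have h2 : IsUnit (((z⁻¹ : GL n F) : Matrix n n F)).det :=
    (Matrix.isUnit_iff_isUnit_det _).mp ⟨z⁻¹, rfl⟩
  rw [Matrix.rank_mul_eq_left_of_isUnit_det _ _ h2,
    Matrix.rank_mul_eq_right_of_isUnit_det _ _ h1]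

lemma nu_conj [DecidableEq n] (z : GL n F) (M : Matrix n n F) :
    nu ((z : Matrix n n F) * M * ((z⁻¹ : GL n F) : Matrix n n F)) = nu M := by
  have h1 := nu_add_rank ((z : Matrix n n F) * M * ((z⁻¹ : GL n F) : Matrix n n F))
  have h2 := nu_add_rank M
  rw [rank_conj] at h1
  omega

lemma nu_reindex {m : Type*} [Fintype m] (e : n ≃ m) (M : Matrix n n F) :
    nu ((reindex e e) M) = nu M := by
  have h1 := nu_add_rank ((reindex e e) M)
  have h2 := nu_add_rank M
  rw [Matrix.rank_reindex] at h1
  rw [Fintype.card_congr e] at h2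
  omega

lemma nu_diagonal [DecidableEq n] [DecidableEq F] (w : n → F) :
    nu (diagonal w) = Fintype.card {i // w i = 0} := by
  classical
  have h1 := nu_add_rank (diagonal w)
  rw [Matrix.rank_diagonal] at h1
  have h2 : Fintype.card {i // ¬ w i = 0} = Fintype.card n - Fintype.card {i // w i = 0} :=
    Fintype.card_subtype_compl _
  have h3 : Fintype.card {i // w i = 0} ≤ Fintype.card n := Fintype.card_subtype_le _
  have h4 : Fintype.card {i // w i ≠ 0} = Fintype.card {i // ¬ w i = 0} := rfl
  omega

end nu

section poly

variable {n : Type*} [Fintype n] [DecidableEq n]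

lemma smulone_mulVec (t : F) (w : n → F) : ((t • (1 : Matrix n n F))).mulVec w = t • w := by
  rw [Matrix.smul_mulVec, Matrix.one_mulVec]

lemma expand2 (M : Matrix n n F) (x y : F) :
    (M - x • 1) * (M - y • 1) = M * M - (x + y) • M + (x * y) • (1 : Matrix n n F) := by
  simp only [sub_mul, mul_sub, mul_smul_comm, smul_mul_assoc, one_mul, mul_one, smul_smul,
    smul_sub]
  match_scalars <;> ring

lemma commute2 (M : Matrix n n F) (x y : F) :
    Commute (M - x • 1) (M - y • 1) := by
  unfold Commute SemiconjBy
  rw [expand2, expand2]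
  rw [add_comm x y, mul_comm x y]

lemma lagrange3 (M : Matrix n n F) (t₁ t₂ t₃ : F) (h12 : t₁ ≠ t₂) (h13 : t₁ ≠ t₃)
    (h23 : t₂ ≠ t₃) :
    ((t₁-t₂)*(t₁-t₃))⁻¹ • ((M - t₂•1) * (M - t₃•1)) +
      ((t₂-t₁)*(t₂-t₃))⁻¹ • ((M - t₁•1) * (M - t₃•1)) +
      ((t₃-t₁)*(t₃-t₂))⁻¹ • ((M - t₁•1) * (M - t₂•1)) = 1 := by
  have d12 : t₁ - t₂ ≠ 0 := sub_ne_zero.mpr h12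
  have d13 : t₁ - t₃ ≠ 0 := sub_ne_zero.mpr h13
  have d23 : t₂ - t₃ ≠ 0 := sub_ne_zero.mpr h23
  have d21 : t₂ - t₁ ≠ 0 := sub_ne_zero.mpr h12.symm
  have d31 : t₃ - t₁ ≠ 0 := sub_ne_zero.mpr h13.symm
  have d32 : t₃ - t₂ ≠ 0 := sub_ne_zero.mpr h23.symm
  rw [expand2, expand2, expand2]
  match_scalars
  · field_simp
    ring
  · field_simp
    ring
  · field_simp
    ring

lemma sum_ker_ge (M : Matrix n n F) (t₁ t₂ t₃ : F) (h12 : t₁ ≠ t₂) (h13 : t₁ ≠ t₃)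
    (h23 : t₂ ≠ t₃)
    (hq : (M - t₁•1) * ((M - t₂•1) * (M - t₃•1)) = 0) :
    Fintype.card n ≤ nu (M - t₁•1) + nu (M - t₂•1) + nu (M - t₃•1) := by
  classical
  set K₁ := LinearMap.ker (M - t₁•1).mulVecLin with hK₁
  set K₂ := LinearMap.ker (M - t₂•1).mulVecLin with hK₂
  set K₃ := LinearMap.ker (M - t₃•1).mulVecLin with hK₃
  have hq2 : (M - t₂•1) * ((M - t₁•1) * (M - t₃•1)) = 0 := by
    rw [← mul_assoc, ← (commute2 M t₁ t₂).eq, mul_assoc]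
    exact hq
  have hq3 : (M - t₃•1) * ((M - t₁•1) * (M - t₂•1)) = 0 := by
    have c31 := (commute2 M t₁ t₃).symm
    have c32 := (commute2 M t₂ t₃).symm
    have : (M - t₃•1) * ((M - t₁•1) * (M - t₂•1))
        = (M - t₁•1) * ((M - t₂•1) * (M - t₃•1)) := by
      rw [← mul_assoc, c31.eq, mul_assoc, c32.eq, ← mul_assoc]
    rw [this]; exact hq
  have htop : (⊤ : Submodule F (n → F)) ≤ K₁ ⊔ K₂ ⊔ K₃ := by
    intro w _
    have hlag := congrArg (fun N : Matrix n n F => N.mulVec w)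
      (lagrange3 M t₁ t₂ t₃ h12 h13 h23)
    simp only [Matrix.add_mulVec, Matrix.smul_mulVec, Matrix.one_mulVec] at hlag
    have hmem : ∀ (c : F) (P : Matrix n n F), P * ((M - t₁•1) * (M - t₂•1)) = 0 →
        True := fun _ _ _ => trivial
    rw [← hlag]
    refine Submodule.add_mem _ (Submodule.add_mem _ ?_ ?_) ?_
    · apply Submodule.mem_sup_left; apply Submodule.mem_sup_left
      rw [hK₁, LinearMap.mem_ker, mulVecLin_apply, Matrix.mulVec_smul, Matrix.mulVec_mulVec, hq,
        Matrix.zero_mulVec, smul_zero]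
    · apply Submodule.mem_sup_left; apply Submodule.mem_sup_right
      rw [hK₂, LinearMap.mem_ker, mulVecLin_apply, Matrix.mulVec_smul, Matrix.mulVec_mulVec, hq2,
        Matrix.zero_mulVec, smul_zero]
    · apply Submodule.mem_sup_right
      rw [hK₃, LinearMap.mem_ker, mulVecLin_apply, Matrix.mulVec_smul, Matrix.mulVec_mulVec, hq3,
        Matrix.zero_mulVec, smul_zero]
  have h1 : Fintype.card n = Module.finrank F (⊤ : Submodule F (n → F)) := by
    rw [finrank_top, Module.finrank_fintype_fun_eq_card]
  have h2 : Module.finrank F (⊤ : Submodule F (n → F))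
      ≤ Module.finrank F ↥(K₁ ⊔ K₂ ⊔ K₃) := Submodule.finrank_mono htop
  have h3 := Submodule.finrank_sup_add_finrank_inf_eq (K₁ ⊔ K₂) K₃
  have h4 := Submodule.finrank_sup_add_finrank_inf_eq K₁ K₂
  have e1 : nu (M - t₁•1) = Module.finrank F K₁ := rfl
  have e2 : nu (M - t₂•1) = Module.finrank F K₂ := rfl
  have e3 : nu (M - t₃•1) = Module.finrank F K₃ := rfl
  omega

end poly

section kron

variable {na nb : Type*} [Fintype na] [DecidableEq na] [Fintype nb] [DecidableEq nb]

lemma kron_li {Γ : Type*} [Fintype Γ] {m k : Γ → ℕ}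
    (w : ∀ γ, Fin (m γ) → (na → F)) (v : ∀ γ, Fin (k γ) → (nb → F))
    (hw : LinearIndependent F (fun ji : Σ γ, Fin (m γ) => w ji.1 ji.2))
    (hv : ∀ γ, LinearIndependent F (v γ)) :
    LinearIndependent F
      (fun x : Σ γ, Fin (m γ) × Fin (k γ) => vk (w x.1 x.2.1) (v x.1 x.2.2)) := by
  classical
  rw [Fintype.linearIndependent_iff]
  intro c hc
  have hd : ∀ (l : nb) (ji : Σ γ, Fin (m γ)),
      (∑ j, c ⟨ji.1, (ji.2, j)⟩ * v ji.1 j l) = 0 := by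
    intro l
    apply Fintype.linearIndependent_iff.mp hw
      (fun ji : Σ γ, Fin (m γ) => ∑ j, c ⟨ji.1, (ji.2, j)⟩ * v ji.1 j l)
    funext i0
    have hc0 := congrFun hc (i0, l)
    simp only [Finset.sum_apply, Pi.smul_apply, Pi.zero_apply, smul_eq_mul, vk] at hc0
    simp only [Finset.sum_apply, Pi.smul_apply, Pi.zero_apply, smul_eq_mul]
    rw [← hc0]
    rw [← Finset.univ_sigma_univ, Finset.sum_sigma]
    rw [← Finset.univ_sigma_univ, Finset.sum_sigma]
    apply Finset.sum_congr rfl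
    intro γ _
    rw [Fintype.sum_prod_type]
    apply Finset.sum_congr rfl
    intro i _
    rw [Finset.sum_mul]
    apply Finset.sum_congr rfl
    intro j _
    ring
  intro x
  obtain ⟨γ, i, j⟩ := x
  apply Fintype.linearIndependent_iff.mp (hv γ) (fun j => c ⟨γ, (i, j)⟩)
  · funext l
    have h2 := hd l ⟨γ, i⟩
    simp only [Finset.sum_apply, Pi.smul_apply, Pi.zero_apply, smul_eq_mul]
    exact h2

lemma mem_ker_iff (M : Matrix na na F) (t : F) (w : na → F) :
    w ∈ LinearMap.ker (M - t • 1).mulVecLin ↔ M.mulVec w = t • w := by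
  rw [LinearMap.mem_ker, mulVecLin_apply, sub_mulVec, smul_mulVec, one_mulVec,
    sub_eq_zero]

lemma kron_count (A : Matrix na na F) (B : Matrix nb nb F)
    (N : Matrix (na × nb) (na × nb) F) (S : Finset F) (βm : F → F)
    (hpair : ∀ α ∈ S, ∀ (w : na → F) (v' : nb → F), A.mulVec w = α • w →
      B.mulVec v' = βm α • v' → N.mulVec (vk w v') = 0) :
    ∑ α ∈ S, nu (A - α • 1) * nu (B - βm α • 1) ≤ nu N := by
  classical
  have hker : ∀ (α : F),
      LinearMap.ker (A - α • 1).mulVecLin = Module.End.eigenspace A.mulVecLin α := by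
    intro α
    ext w
    rw [mem_ker_iff, Module.End.mem_eigenspace_iff, mulVecLin_apply]
  let KA : F → Submodule F (na → F) := fun α => LinearMap.ker (A - α • 1).mulVecLin
  let KB : F → Submodule F (nb → F) := fun α => LinearMap.ker (B - βm α • 1).mulVecLin
  let m : ↥S → ℕ := fun α => nu (A - (α : F) • 1)
  let k : ↥S → ℕ := fun α => nu (B - βm (α : F) • 1)
  let w : ∀ α : ↥S, Fin (m α) → (na → F) :=
    fun α i => ((Module.finBasis F (KA (α : F))) i : na → F)
  let v : ∀ α : ↥S, Fin (k α) → (nb → F) :=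
    fun α j => ((Module.finBasis F (KB (α : F))) j : nb → F)
  have hwmem : ∀ (α : ↥S) i, w α i ∈ KA (α : F) := fun α i => SetLike.coe_mem _
  have hvmem : ∀ (α : ↥S) j, v α j ∈ KB (α : F) := fun α j => SetLike.coe_mem _
  have hwli : ∀ α : ↥S, LinearIndependent F (w α) := by
    intro α
    have h1 := (Module.finBasis F (KA (α : F))).linearIndependent
    have h2 := h1.map' (KA (α : F)).subtype (Submodule.ker_subtype _)
    exact h2
  have hvli : ∀ α : ↥S, LinearIndependent F (v α) := by
    intro α
    have h1 := (Module.finBasis F (KB (α : F))).linearIndependent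
    have h2 := h1.map' (KB (α : F)).subtype (Submodule.ker_subtype _)
    exact h2
  have hcomb : LinearIndependent F (fun ji : Σ α : ↥S, Fin (m α) => w ji.1 ji.2) := by
    apply linearIndependent_iUnion_finite hwli
    intro α t _ hαt
    have hind : iSupIndep (fun α' : ↥S => KA (α' : F)) := by
      have h1 : iSupIndep (Module.End.eigenspace A.mulVecLin) :=
        Module.End.eigenspaces_iSupIndep A.mulVecLin
      have h2 := h1.comp (Subtype.val_injective : Function.Injective ((↑) : ↥S → F))
      have h3 : (fun α' : ↥S => KA (α' : F))
          = (Module.End.eigenspace A.mulVecLin) ∘ ((↑) : ↥S → F) := by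
        funext α'
        exact hker (α' : F)
      rw [h3]
      exact h2
    have hdisj : Disjoint (KA (α : F)) (⨆ α' ∈ t, KA (α' : F)) :=
      hind.disjoint_biSup hαt
    apply hdisj.mono
    · exact Submodule.span_le.mpr (Set.range_subset_iff.mpr fun i => hwmem α i)
    · exact iSup₂_mono fun α' _ =>
        Submodule.span_le.mpr (Set.range_subset_iff.mpr fun i => hwmem α' i)
  have hfamli := kron_li w v hcomb hvli
  have hfammem : ∀ x : Σ α : ↥S, Fin (m α) × Fin (k α),
      vk (w x.1 x.2.1) (v x.1 x.2.2) ∈ LinearMap.ker N.mulVecLin := by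
    rintro ⟨α, i, j⟩
    rw [LinearMap.mem_ker, mulVecLin_apply]
    exact hpair (α : F) α.2 _ _ ((mem_ker_iff A _ _).mp (hwmem α i))
      ((mem_ker_iff B _ _).mp (hvmem α j))
  let fam' : (Σ α : ↥S, Fin (m α) × Fin (k α)) → ↥(LinearMap.ker N.mulVecLin) :=
    fun x => ⟨vk (w x.1 x.2.1) (v x.1 x.2.2), hfammem x⟩
  have hfam'li : LinearIndependent F fam' := by
    apply LinearIndependent.of_comp (LinearMap.ker N.mulVecLin).subtype
    exact hfamli
  have hcard := hfam'li.fintype_card_le_finrank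
  have hcard2 : Fintype.card (Σ α : ↥S, Fin (m α) × Fin (k α)) = ∑ α : ↥S, m α * k α := by
    rw [Fintype.card_sigma]
    apply Finset.sum_congr rfl
    intro α _
    rw [Fintype.card_prod, Fintype.card_fin, Fintype.card_fin]
  rw [hcard2] at hcard
  have hcard3 : ∑ α : ↥S, m α * k α = ∑ α ∈ S, nu (A - α • 1) * nu (B - βm α • 1) :=
    Finset.sum_coe_sort S (fun α => nu (A - α • 1) * nu (B - βm α • 1))
  rw [hcard3] at hcard
  exact hcard

lemma nu_eq_zero_of_q (M : Matrix na na F) (t₁ t₂ t₃ γ : F)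
    (hq : (M - t₁ • 1) * ((M - t₂ • 1) * (M - t₃ • 1)) = 0)
    (h1 : γ ≠ t₁) (h2 : γ ≠ t₂) (h3 : γ ≠ t₃) : nu (M - γ • 1) = 0 := by
  classical
  apply Submodule.finrank_eq_zero.mpr
  rw [Submodule.eq_bot_iff]
  intro x hx
  have hM : M.mulVec x = γ • x := (mem_ker_iff M γ x).mp hx
  have hstep : ∀ t : F, (M - t • 1).mulVec x = (γ - t) • x := fun t => by
    rw [sub_mulVec, smul_mulVec, one_mulVec, hM, ← sub_smul]
  have hkey : ((M - t₁ • 1) * ((M - t₂ • 1) * (M - t₃ • 1))).mulVec x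
      = ((γ - t₁) * ((γ - t₂) * (γ - t₃))) • x := by
    rw [← Matrix.mulVec_mulVec, ← Matrix.mulVec_mulVec, hstep t₃, Matrix.mulVec_smul, hstep t₂,
      Matrix.mulVec_smul, Matrix.mulVec_smul, hstep t₁]
    module
  rw [hq, Matrix.zero_mulVec] at hkey
  have hne : (γ - t₁) * ((γ - t₂) * (γ - t₃)) ≠ 0 :=
    mul_ne_zero (sub_ne_zero.mpr h1)
      (mul_ne_zero (sub_ne_zero.mpr h2) (sub_ne_zero.mpr h3))
  exact ((smul_eq_zero.mp hkey.symm).resolve_left hne)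

end kron
lemma endgame (T : Finset F) (e f : F → ℕ) (s : F) (a b : ℕ)
    (hs : s ≠ 0)
    (hE : ∑ α ∈ T, e α = a) (hF : ∑ β ∈ T, f β = b)
    (hB : ∑ α ∈ T, e α * f (s * α⁻¹) + 4 = a * b)
    (hB' : ∑ β ∈ T, f β * e (s * β⁻¹) + 4 = a * b)
    (hoffe : ∀ γ, γ ∉ T → e γ = 0) (hofff : ∀ γ, γ ∉ T → f γ = 0)
    (hC : ∃ α₁ ∈ T, ∃ β₁ ∈ T, 1 ≤ e α₁ ∧ 1 ≤ f β₁ ∧ e α₁ * f β₁ ≤ 2)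
    (ha : 3 ≤ a) (hb : 3 ≤ b) (hab : 16 ≤ a * b) : False := by
  classical
  obtain ⟨α₁, hα₁T, β₁, hβ₁T, he₁, hf₁, hef₁⟩ := hC
  have he₁2 : e α₁ ≤ 2 := by
    have h1 : e α₁ * 1 ≤ e α₁ * f β₁ := Nat.mul_le_mul_left _ hf₁
    omega
  have hf₁2 : f β₁ ≤ 2 := by
    have h1 : 1 * f β₁ ≤ e α₁ * f β₁ := Nat.mul_le_mul_right _ he₁
    omega
  have pairf : ∀ γ, γ ∈ T → γ ≠ β₁ → f γ + f β₁ ≤ b := by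
    intro γ hγ hne
    rw [← hF, ← Finset.add_sum_erase T f hγ]
    have h1 : f β₁ ≤ ∑ x ∈ T.erase γ, f x :=
      Finset.single_le_sum (fun i _ => Nat.zero_le _) (Finset.mem_erase.mpr ⟨hne.symm, hβ₁T⟩)
    omega
  have paire : ∀ γ, γ ∈ T → γ ≠ α₁ → e γ + e α₁ ≤ a := by
    intro γ hγ hne
    rw [← hE, ← Finset.add_sum_erase T e hγ]
    have h1 : e α₁ ≤ ∑ x ∈ T.erase γ, e x :=
      Finset.single_le_sum (fun i _ => Nat.zero_le _) (Finset.mem_erase.mpr ⟨hne.symm, hα₁T⟩)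
    omega
  have key1 : ∀ α ∈ T, f (s * α⁻¹) + 1 ≤ b := by
    intro α hα
    by_cases hγ : s * α⁻¹ ∈ T
    · by_cases hγβ : s * α⁻¹ = β₁
      · rw [hγβ]; omega
      · have := pairf _ hγ hγβ; omega
    · rw [hofff _ hγ]; omega
  have key2 : ∀ β ∈ T, e (s * β⁻¹) + 1 ≤ a := by
    intro β hβ
    by_cases hγ : s * β⁻¹ ∈ T
    · by_cases hγα : s * β⁻¹ = α₁
      · rw [hγα]; omega
      · have := paire _ hγ hγα; omega
    · rw [hoffe _ hγ]; omega
  have hsplit : ∑ α ∈ T, e α * (f (s * α⁻¹) + 1)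
      = ∑ α ∈ T, e α * f (s * α⁻¹) + ∑ α ∈ T, e α := by
    rw [← Finset.sum_add_distrib]
    exact Finset.sum_congr rfl fun α _ => by ring
  have ha4 : a ≤ 4 := by
    have h1 : ∑ α ∈ T, e α * (f (s * α⁻¹) + 1) ≤ ∑ α ∈ T, e α * b :=
      Finset.sum_le_sum fun α hα => Nat.mul_le_mul_left _ (key1 α hα)
    rw [← Finset.sum_mul, hE, hsplit, hE, ← hB] at h1
    omega
  have hb4 : b ≤ 4 := by
    have h1 : ∑ β ∈ T, f β * (e (s * β⁻¹) + 1) ≤ ∑ β ∈ T, f β * a :=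
      Finset.sum_le_sum fun β hβ => Nat.mul_le_mul_left _ (key2 β hβ)
    have hsplit' : ∑ β ∈ T, f β * (e (s * β⁻¹) + 1)
        = ∑ β ∈ T, f β * e (s * β⁻¹) + ∑ β ∈ T, f β := by
      rw [← Finset.sum_add_distrib]
      exact Finset.sum_congr rfl fun β _ => by ring
    rw [← Finset.sum_mul, hF, hsplit', hF] at h1
    have h2 : b * a = a * b := Nat.mul_comm b a
    rw [h2, ← hB'] at h1
    omega
  have ha' : a = 4 := by
    have h1 : a * b ≤ a * 4 := Nat.mul_le_mul_left a hb4
    have h2 : 4 ≤ a := by nlinarith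
    omega
  have hb' : b = 4 := by
    have h1 : a * b ≤ 4 * b := Nat.mul_le_mul_right b ha4
    have h2 : 4 ≤ b := by nlinarith
    omega
  subst ha' hb'
  have htight : ∀ α ∈ T, e α * (f (s * α⁻¹) + 1) = e α * 4 := by
    apply (Finset.sum_eq_sum_iff_of_le (fun α hα => Nat.mul_le_mul_left _ (key1 α hα))).mp
    rw [hsplit, hE, ← Finset.sum_mul, hE]
    omega
  have htf : ∀ α ∈ T, 1 ≤ e α → f (s * α⁻¹) = 3 := by
    intro α hα he
    have h1 := htight α hα
    have h2 : f (s * α⁻¹) + 1 = 4 := Nat.eq_of_mul_eq_mul_left he h1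
    omega
  have hα₁f : f (s * α₁⁻¹) = 3 := htf α₁ hα₁T he₁
  have hexα₃ : ∃ α₃ ∈ T, α₃ ≠ α₁ ∧ 1 ≤ e α₃ := by
    by_contra hcon
    push_neg at hcon
    have h1 : ∑ x ∈ T.erase α₁, e x = 0 := Finset.sum_eq_zero fun x hx => by
      have hxT := Finset.mem_of_mem_erase hx
      have hxne := (Finset.mem_erase.mp hx).1
      have := hcon x hxT hxne
      omega
    have h2 : ∑ α ∈ T, e α = e α₁ := by
      rw [← Finset.add_sum_erase T e hα₁T, h1]
      omega
    omega
  obtain ⟨α₃, hα₃T, hα₃ne, he₃⟩ := hexα₃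
  have hα₃f : f (s * α₃⁻¹) = 3 := htf α₃ hα₃T he₃
  have hne13 : s * α₁⁻¹ ≠ s * α₃⁻¹ := by
    intro h
    have h2 := mul_left_cancel₀ hs h
    rw [_root_.inv_inj] at h2
    exact hα₃ne h2.symm
  have h₁T : s * α₁⁻¹ ∈ T := by
    by_contra hcc
    rw [hofff _ hcc] at hα₁f
    omega
  have h₃T : s * α₃⁻¹ ∈ T := by
    by_contra hcc
    rw [hofff _ hcc] at hα₃f
    omega
  have hge : f (s * α₁⁻¹) + f (s * α₃⁻¹) ≤ 4 := by
    rw [← hF, ← Finset.add_sum_erase T f h₁T]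
    have h1 : f (s * α₃⁻¹) ≤ ∑ x ∈ T.erase (s * α₁⁻¹), f x :=
      Finset.single_le_sum (fun i _ => Nat.zero_le _)
        (Finset.mem_erase.mpr ⟨(hne13).symm, h₃T⟩)
    omega
  omega

end Stmt7Aux

set_option maxHeartbeats 1600000 in
open Stmt7Aux in
/-- Let `𝔽` be algebraically closed of characteristic `p > 0`, `d ≥ 16`, and
`G ≤ GL_d(𝔽)` containing an element of order prime to `p` conjugate to
`diag(ζ, ζ, ζ⁻¹, ζ⁻¹, 1, …, 1)` with `ζ² ≠ 1`. If `G` is conjugate into a Kronecker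
product subgroup `GL_a ⊗ GL_b` with `d = ab`, then `min(a, b) ≤ 2`. -/
theorem stmt_7 (F : Type*) [Field F] [IsAlgClosed F] (p : ℕ) [Fact p.Prime] [CharP F p]
    (d : ℕ) (hd : 16 ≤ d) (G : Subgroup (GL (Fin d) F)) (ζ : Fˣ) (hζ : ζ ^ 2 ≠ 1)
    (hg : ∃ g ∈ G, (orderOf g).Coprime p ∧ ∃ y : GL (Fin d) F,
      ((y * g * y⁻¹ : GL (Fin d) F) : Matrix (Fin d) (Fin d) F) =
        Matrix.diagonal (fun i : Fin d =>
          if (i : ℕ) < 2 then (ζ : F) else if (i : ℕ) < 4 then ((ζ⁻¹ : Fˣ) : F) else 1)) :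
    ∀ (a b : ℕ), a * b = d →
      (∃ (e : Fin a × Fin b ≃ Fin d) (x : GL (Fin d) F),
          ∀ g ∈ G, ∃ (g₁ : Matrix (Fin a) (Fin a) F) (g₂ : Matrix (Fin b) (Fin b) F),
            ((x * g * x⁻¹ : GL (Fin d) F) : Matrix (Fin d) (Fin d) F) =
              Matrix.reindex e e (Matrix.kroneckerMap (· * ·) g₁ g₂)) →
      min a b ≤ 2 := by
  classical
  intro a b hab hex
  by_contra hmin
  push_neg at hmin
  rw [lt_min_iff] at hmin
  obtain ⟨ha2, hb2⟩ := hmin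
  have ha3 : 3 ≤ a := ha2
  have hb3 : 3 ≤ b := hb2
  obtain ⟨g, hgG, -, y, hD⟩ := hg
  obtain ⟨e, x, hx⟩ := hex
  obtain ⟨g₁, g₂, hK⟩ := hx g hgG
  -- notation
  set ζc : F := (ζ : F) with hζcdef
  set ζi : F := ((ζ⁻¹ : Fˣ) : F) with hζidef
  have hζu1 : ζ ≠ 1 := by intro h; exact hζ (by rw [h, one_pow])
  have hζc1 : ζc ≠ 1 := by
    intro h
    exact hζu1 (Units.ext (by rw [Units.val_one]; exact h))
  have hζi1 : ζi ≠ 1 := by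
    intro h
    have h2 : ζ⁻¹ = 1 := Units.ext (by rw [Units.val_one]; exact h)
    exact hζu1 (inv_eq_one.mp h2)
  have hζcζi : ζc ≠ ζi := by
    intro h
    have h2 : ζ = ζ⁻¹ := Units.ext h
    apply hζ
    rw [sq]
    nth_rewrite 2 [h2]
    simp
  have hζc0 : ζc ≠ 0 := Units.ne_zero ζ
  have hζi0 : ζi ≠ 0 := Units.ne_zero ζ⁻¹
  set diag : Fin d → F :=
    (fun i : Fin d => if (i : ℕ) < 2 then ζc else if (i : ℕ) < 4 then ζi else 1) with hdiagdef
  have hD' : ((y * g * y⁻¹ : GL (Fin d) F) : Matrix (Fin d) (Fin d) F)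
      = Matrix.diagonal diag := hD
  set K : Matrix (Fin a × Fin b) (Fin a × Fin b) F := Matrix.kroneckerMap (· * ·) g₁ g₂
    with hKdef
  set z : GL (Fin d) F := x * y⁻¹ with hzdef
  have hgl : z * (y * g * y⁻¹) * z⁻¹ = x * g * x⁻¹ := by rw [hzdef]; group
  have hsim : (reindex e e) K = (z : Matrix (Fin d) (Fin d) F) * Matrix.diagonal diag *
      ((z⁻¹ : GL (Fin d) F) : Matrix (Fin d) (Fin d) F) := by
    rw [← hK, ← hgl, Units.val_mul, Units.val_mul, hD']
  have hzz : (z : Matrix (Fin d) (Fin d) F) *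
      ((z⁻¹ : GL (Fin d) F) : Matrix (Fin d) (Fin d) F) = 1 := Units.mul_inv z
  have hzz' : ((z⁻¹ : GL (Fin d) F) : Matrix (Fin d) (Fin d) F) *
      (z : Matrix (Fin d) (Fin d) F) = 1 := Units.inv_mul z
  have hconj1 : ∀ t : F, (z : Matrix (Fin d) (Fin d) F) * (Matrix.diagonal diag - t • 1) *
      ((z⁻¹ : GL (Fin d) F) : Matrix (Fin d) (Fin d) F)
      = (z : Matrix (Fin d) (Fin d) F) * Matrix.diagonal diag *
        ((z⁻¹ : GL (Fin d) F) : Matrix (Fin d) (Fin d) F) - t • 1 := by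
    intro t
    have h2 : (z : Matrix (Fin d) (Fin d) F) * (t • 1) *
        ((z⁻¹ : GL (Fin d) F) : Matrix (Fin d) (Fin d) F) = t • 1 := by
      rw [mul_smul_comm, mul_one, smul_mul_assoc, hzz]
    rw [Matrix.mul_sub, Matrix.sub_mul, h2]
  have hmulconj : ∀ P Q : Matrix (Fin d) (Fin d) F,
      ((z : Matrix (Fin d) (Fin d) F) * P * ((z⁻¹ : GL (Fin d) F) : Matrix (Fin d) (Fin d) F)) *
      ((z : Matrix (Fin d) (Fin d) F) * Q * ((z⁻¹ : GL (Fin d) F) : Matrix (Fin d) (Fin d) F))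
      = (z : Matrix (Fin d) (Fin d) F) * (P * Q) *
        ((z⁻¹ : GL (Fin d) F) : Matrix (Fin d) (Fin d) F) := by
    intro P Q
    have h1 : ((z⁻¹ : GL (Fin d) F) : Matrix (Fin d) (Fin d) F) *
        ((z : Matrix (Fin d) (Fin d) F) * (Q * ((z⁻¹ : GL (Fin d) F) : Matrix (Fin d) (Fin d) F)))
        = Q * ((z⁻¹ : GL (Fin d) F) : Matrix (Fin d) (Fin d) F) := by
      rw [← Matrix.mul_assoc, hzz', Matrix.one_mul]
    simp only [Matrix.mul_assoc]
    rw [h1]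
  have hds : ∀ t : F, Matrix.diagonal diag - t • 1
      = Matrix.diagonal (fun i => diag i - t) := by
    intro t
    ext i j
    by_cases h : i = j
    · subst h; simp [Matrix.diagonal_apply_eq, Matrix.one_apply_eq]
    · simp [Matrix.diagonal_apply_ne _ h, Matrix.one_apply_ne h]
  have hQD : (Matrix.diagonal diag - (1:F) • 1) * ((Matrix.diagonal diag - ζc • 1) *
      (Matrix.diagonal diag - ζi • 1)) = 0 := by
    rw [hds, hds, hds, diagonal_mul_diagonal, diagonal_mul_diagonal]
    have hfun : (fun i => (diag i - 1) * ((diag i - ζc) * (diag i - ζi)))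
        = (fun _ : Fin d => (0:F)) := by
      funext i
      rw [hdiagdef]
      by_cases h2 : (i:ℕ) < 2
      · simp only [h2, if_true]
        ring_nf
      · by_cases h4 : (i:ℕ) < 4
        · simp only [h2, if_false, h4, if_true]
          simp [sub_self]
        · simp only [h2, if_false, h4, if_false]
          simp [sub_self]
    rw [hfun, Matrix.diagonal_zero]
  have hQK : (K - (1:F) • 1) * ((K - ζc • 1) * (K - ζi • 1)) = 0 := by
    apply (Matrix.reindexAlgEquiv F F e).injective
    rw [_root_.map_mul, _root_.map_mul, _root_.map_sub, _root_.map_sub, _root_.map_sub,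
      _root_.map_smul, _root_.map_smul, _root_.map_smul, _root_.map_one, _root_.map_zero,
      Matrix.reindexAlgEquiv_apply, hsim, ← hconj1, ← hconj1, ← hconj1, hmulconj,
      hmulconj, hQD, Matrix.mul_zero, Matrix.zero_mul]
  have nuK : ∀ r : F, nu (K - r • 1) = Fintype.card {i : Fin d // diag i = r} := by
    intro r
    have h1 : nu (K - r • 1) = nu ((reindex e e) (K - r • 1)) := (nu_reindex e (K - r • 1)).symm
    have h3 : (reindex e e) (K - r • 1) = (reindex e e) K - r • 1 := by
      rw [← Matrix.reindexAlgEquiv_apply F F e, _root_.map_sub, _root_.map_smul,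
        _root_.map_one, Matrix.reindexAlgEquiv_apply]
    have h4 : (reindex e e) K - r • 1 = (z : Matrix (Fin d) (Fin d) F) *
        (Matrix.diagonal diag - r • 1) * ((z⁻¹ : GL (Fin d) F) : Matrix (Fin d) (Fin d) F) := by
      rw [hsim]; exact (hconj1 r).symm
    rw [h1, h3, h4, nu_conj, hds r, nu_diagonal]
    apply Fintype.card_congr
    apply Equiv.subtypeEquivRight
    intro i
    exact sub_eq_zero
  -- counting the diagonal
  have cardζc : Fintype.card {i : Fin d // diag i = ζc} = 2 := by
    rw [Fintype.card_subtype]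
    have hset : Finset.univ.filter (fun i : Fin d => diag i = ζc)
        = {(⟨0, by omega⟩ : Fin d), ⟨1, by omega⟩} := by
      ext i
      simp only [Finset.mem_filter, Finset.mem_univ, true_and, Finset.mem_insert,
        Finset.mem_singleton]
      constructor
      · intro hi
        simp only [hdiagdef] at hi
        split_ifs at hi with h2 h4
        · have h01 : (i:ℕ) = 0 ∨ (i:ℕ) = 1 := by omega
          rcases h01 with h | h
          · left; exact Fin.ext h
          · right; exact Fin.ext h
        · exact absurd hi.symm hζcζi
        · exact absurd hi.symm hζc1
      · intro hi
        rcases hi with h | h <;> (subst h; simp only [hdiagdef]; norm_num)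
    rw [hset]
    rw [Finset.card_insert_of_notMem (by simp [Fin.ext_iff]), Finset.card_singleton]
  have cardζi : Fintype.card {i : Fin d // diag i = ζi} = 2 := by
    rw [Fintype.card_subtype]
    have hset : Finset.univ.filter (fun i : Fin d => diag i = ζi)
        = {(⟨2, by omega⟩ : Fin d), ⟨3, by omega⟩} := by
      ext i
      simp only [Finset.mem_filter, Finset.mem_univ, true_and, Finset.mem_insert,
        Finset.mem_singleton]
      constructor
      · intro hi
        simp only [hdiagdef] at hi
        split_ifs at hi with h2 h4
        · exact absurd hi hζcζi
        · have h01 : (i:ℕ) = 2 ∨ (i:ℕ) = 3 := by omega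
          rcases h01 with h | h
          · left; exact Fin.ext h
          · right; exact Fin.ext h
        · exact absurd hi.symm hζi1
      · intro hi
        rcases hi with h | h <;> (subst h; simp only [hdiagdef]; norm_num)
    rw [hset]
    rw [Finset.card_insert_of_notMem (by simp [Fin.ext_iff]), Finset.card_singleton]
  have card1 : Fintype.card {i : Fin d // diag i = 1} + 4 = d := by
    rw [Fintype.card_subtype]
    have hpred : Finset.univ.filter (fun i : Fin d => diag i = 1)
        = Finset.univ.filter (fun i : Fin d => ¬ ((i:ℕ) < 4)) := by
      apply Finset.filter_congr
      intro i _
      simp only [hdiagdef]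
      constructor
      · intro hi hlt
        by_cases h2 : (i:ℕ) < 2
        · rw [if_pos h2] at hi; exact hζc1 hi
        · rw [if_neg h2, if_pos hlt] at hi; exact hζi1 hi
      · intro hge
        have h2 : ¬ ((i:ℕ) < 2) := by omega
        rw [if_neg h2, if_neg hge]
    rw [hpred]
    have hsplit := Finset.card_filter_add_card_filter_not
      (s := (Finset.univ : Finset (Fin d))) (fun i : Fin d => (i:ℕ) < 4)
    have hc4 : (Finset.univ.filter (fun i : Fin d => (i:ℕ) < 4)).card = 4 := by
      have hset : Finset.univ.filter (fun i : Fin d => (i:ℕ) < 4)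
          = {(⟨0, by omega⟩ : Fin d), ⟨1, by omega⟩, ⟨2, by omega⟩, ⟨3, by omega⟩} := by
        ext i
        simp only [Finset.mem_filter, Finset.mem_univ, true_and, Finset.mem_insert,
          Finset.mem_singleton]
        constructor
        · intro hi
          have h03 : (i:ℕ) = 0 ∨ (i:ℕ) = 1 ∨ (i:ℕ) = 2 ∨ (i:ℕ) = 3 := by omega
          rcases h03 with h | h | h | h
          · exact Or.inl (Fin.ext h)
          · exact Or.inr (Or.inl (Fin.ext h))
          · exact Or.inr (Or.inr (Or.inl (Fin.ext h)))
          · exact Or.inr (Or.inr (Or.inr (Fin.ext h)))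
        · intro hi
          rcases hi with h | h | h | h <;> (subst h; norm_num)
      rw [hset]
      rw [Finset.card_insert_of_notMem (by simp [Fin.ext_iff]),
        Finset.card_insert_of_notMem (by simp [Fin.ext_iff]),
        Finset.card_insert_of_notMem (by simp [Fin.ext_iff]), Finset.card_singleton]
    have hcu : (Finset.univ : Finset (Fin d)).card = d := by simp
    omega
  have card0 : ∀ r : F, r ≠ 1 → r ≠ ζc → r ≠ ζi →
      Fintype.card {i : Fin d // diag i = r} = 0 := by
    intro r h1 h2 h3
    apply Fintype.card_eq_zero_iff.mpr
    constructor
    rintro ⟨i, hi⟩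
    simp only [hdiagdef] at hi
    split_ifs at hi
    · exact h2 hi.symm
    · exact h3 hi.symm
    · exact h1 hi.symm
  -- eigenvectors
  haveI hnta : Nontrivial (Fin a → F) :=
    ⟨(fun _ => 0), (fun _ => 1), fun h => zero_ne_one (congrFun h ⟨0, by omega⟩)⟩
  haveI hntb : Nontrivial (Fin b → F) :=
    ⟨(fun _ => 0), (fun _ => 1), fun h => zero_ne_one (congrFun h ⟨0, by omega⟩)⟩
  obtain ⟨lam, hlam⟩ := Module.End.exists_eigenvalue (Matrix.mulVecLin g₁)
  obtain ⟨u, hu⟩ := hlam.exists_hasEigenvector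
  have huA : g₁.mulVec u = lam • u := by
    have h := hu.apply_eq_smul; rwa [Matrix.mulVecLin_apply] at h
  have hu0 : u ≠ 0 := hu.2
  obtain ⟨μ, hμ⟩ := Module.End.exists_eigenvalue (Matrix.mulVecLin g₂)
  obtain ⟨v, hv⟩ := hμ.exists_hasEigenvector
  have hvB : g₂.mulVec v = μ • v := by
    have h := hv.apply_eq_smul; rwa [Matrix.mulVecLin_apply] at h
  have hv0 : v ≠ 0 := hv.2
  set A' : Matrix (Fin a) (Fin a) F := μ • g₁ with hA'def
  set B' : Matrix (Fin b) (Fin b) F := lam • g₂ with hB'def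
  set s : F := lam * μ with hsdef
  -- factor lemmas
  have hfacL : ∀ (t : F) (w : Fin a → F),
      (K - t • 1).mulVec (vk w v) = vk ((A' - t • 1).mulVec w) v := by
    intro t w
    have hL : (K - t • 1).mulVec (vk w v) = μ • vk (g₁.mulVec w) v - t • vk w v := by
      rw [sub_mulVec, smulone_mulVec, hKdef, mulVec_vk, hvB, vk_smul_right]
    have hR : vk ((A' - t • 1).mulVec w) v = μ • vk (g₁.mulVec w) v - t • vk w v := by
      rw [sub_mulVec, smulone_mulVec, vk_sub_left, hA'def, smul_mulVec,
        vk_smul_left, vk_smul_left]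
    rw [hL, hR]
  have hfacR : ∀ (t : F) (v' : Fin b → F),
      (K - t • 1).mulVec (vk u v') = vk u ((B' - t • 1).mulVec v') := by
    intro t v'
    have hL : (K - t • 1).mulVec (vk u v') = lam • vk u (g₂.mulVec v') - t • vk u v' := by
      rw [sub_mulVec, smulone_mulVec, hKdef, mulVec_vk, huA, vk_smul_left]
    have hR : vk u ((B' - t • 1).mulVec v') = lam • vk u (g₂.mulVec v') - t • vk u v' := by
      rw [sub_mulVec, smulone_mulVec, vk_sub_right, hB'def, smul_mulVec,
        vk_smul_right, vk_smul_right]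
    rw [hL, hR]
  have hQA' : (A' - (1:F) • 1) * ((A' - ζc • 1) * (A' - ζi • 1)) = 0 := by
    have hmv : ∀ w : Fin a → F,
        ((A' - (1:F) • 1) * ((A' - ζc • 1) * (A' - ζi • 1))).mulVec w = 0 := by
      intro w
      have h1 : ((K - (1:F) • 1) * ((K - ζc • 1) * (K - ζi • 1))).mulVec (vk w v)
          = vk (((A' - (1:F) • 1) * ((A' - ζc • 1) * (A' - ζi • 1))).mulVec w) v := by
        rw [← Matrix.mulVec_mulVec, ← Matrix.mulVec_mulVec, hfacL, hfacL, hfacL,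
          Matrix.mulVec_mulVec, Matrix.mulVec_mulVec, Matrix.mul_assoc]
      rw [hQK, Matrix.zero_mulVec] at h1
      exact vk_eq_zero_left h1.symm hv0
    ext i j
    have h2 := congrFun (hmv (Pi.single j 1)) i
    simp only [Matrix.mulVec_single, mul_one, Pi.zero_apply] at h2
    simpa using h2
  have hQB' : (B' - (1:F) • 1) * ((B' - ζc • 1) * (B' - ζi • 1)) = 0 := by
    have hmv : ∀ v' : Fin b → F,
        ((B' - (1:F) • 1) * ((B' - ζc • 1) * (B' - ζi • 1))).mulVec v' = 0 := by
      intro v'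
      have h1 : ((K - (1:F) • 1) * ((K - ζc • 1) * (K - ζi • 1))).mulVec (vk u v')
          = vk u (((B' - (1:F) • 1) * ((B' - ζc • 1) * (B' - ζi • 1))).mulVec v') := by
        rw [← Matrix.mulVec_mulVec, ← Matrix.mulVec_mulVec, hfacR, hfacR, hfacR,
          Matrix.mulVec_mulVec, Matrix.mulVec_mulVec, Matrix.mul_assoc]
      rw [hQK, Matrix.zero_mulVec] at h1
      exact vk_eq_zero_right h1.symm hu0
    ext i j
    have h2 := congrFun (hmv (Pi.single j 1)) i
    simp only [Matrix.mulVec_single, mul_one, Pi.zero_apply] at h2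
    simpa using h2
  have hKuv : K.mulVec (vk u v) = s • vk u v := by
    rw [hKdef, mulVec_vk, huA, hvB, vk_smul_left, vk_smul_right, smul_smul, ← hsdef]
  have hsT : s = 1 ∨ s = ζc ∨ s = ζi := by
    by_contra hcon
    push_neg at hcon
    obtain ⟨hc1, hc2, hc3⟩ := hcon
    have h0' : nu (K - s • 1) = 0 := by rw [nuK]; exact card0 s hc1 hc2 hc3
    have hmem : vk u v ∈ LinearMap.ker (K - s • 1).mulVecLin :=
      (mem_ker_iff K s (vk u v)).mpr hKuv
    have hbot : LinearMap.ker (K - s • 1).mulVecLin = ⊥ := Submodule.finrank_eq_zero.mp h0'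
    rw [hbot, Submodule.mem_bot] at hmem
    exact vk_ne_zero hu0 hv0 hmem
  have hs0 : s ≠ 0 := by
    rcases hsT with h | h | h <;> rw [h]
    · exact one_ne_zero
    · exact hζc0
    · exact hζi0
  set T : Finset F := {1, ζc, ζi} with hTdef
  have hmemT : ∀ γ : F, γ ∈ T ↔ γ = 1 ∨ γ = ζc ∨ γ = ζi := by
    intro γ; rw [hTdef]; simp
  have h1T : (1:F) ∈ T := (hmemT 1).mpr (Or.inl rfl)
  have hζcT : ζc ∈ T := (hmemT ζc).mpr (Or.inr (Or.inl rfl))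
  have hζiT : ζi ∈ T := (hmemT ζi).mpr (Or.inr (Or.inr rfl))
  have hT0 : ∀ γ ∈ T, γ ≠ (0:F) := by
    intro γ hγ
    rcases (hmemT γ).mp hγ with h | h | h <;> rw [h]
    · exact one_ne_zero
    · exact hζc0
    · exact hζi0
  have hoffe : ∀ γ, γ ∉ T → nu (A' - γ • 1) = 0 := by
    intro γ hγ
    rw [hmemT] at hγ
    push_neg at hγ
    exact nu_eq_zero_of_q A' 1 ζc ζi γ hQA' hγ.1 hγ.2.1 hγ.2.2
  have hofff : ∀ γ, γ ∉ T → nu (B' - γ • 1) = 0 := by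
    intro γ hγ
    rw [hmemT] at hγ
    push_neg at hγ
    exact nu_eq_zero_of_q B' 1 ζc ζi γ hQB' hγ.1 hγ.2.1 hγ.2.2
  have hM1 : ∀ (t : F) (S : Finset F) (βm : F → F), (∀ α ∈ S, α * βm α = s * t) →
      ∑ α ∈ S, nu (A' - α • 1) * nu (B' - βm α • 1)
        ≤ Fintype.card {i : Fin d // diag i = t} := by
    intro t S βm hprod
    rw [← nuK]
    apply kron_count
    intro α hα w v' hw hv'
    have h2 : μ • (g₁.mulVec w) = α • w := by rw [← smul_mulVec, ← hA'def]; exact hw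
    have h3 : lam • (g₂.mulVec v') = βm α • v' := by rw [← smul_mulVec, ← hB'def]; exact hv'
    have h4a : vk (μ • g₁.mulVec w) (lam • g₂.mulVec v')
        = s • vk (g₁.mulVec w) (g₂.mulVec v') := by
      rw [vk_smul_left, vk_smul_right, smul_smul, mul_comm μ lam, ← hsdef]
    have h4b : vk (α • w) (βm α • v') = (s * t) • vk w v' := by
      rw [vk_smul_left, vk_smul_right, smul_smul, hprod α hα]
    have h4 : s • K.mulVec (vk w v') = (s * t) • vk w v' := by
      calc s • K.mulVec (vk w v') = s • vk (g₁.mulVec w) (g₂.mulVec v') := by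
            rw [hKdef, mulVec_vk]
        _ = vk (μ • g₁.mulVec w) (lam • g₂.mulVec v') := h4a.symm
        _ = vk (α • w) (βm α • v') := by rw [h2, h3]
        _ = (s * t) • vk w v' := h4b
    have h5 : K.mulVec (vk w v') = t • vk w v' := by
      have h6 : s • K.mulVec (vk w v') = s • (t • vk w v') := by rw [h4, smul_smul]
      exact smul_right_injective _ hs0 h6
    rw [sub_mulVec, smulone_mulVec, h5, sub_self]
  have hconv : ∀ (α β₀ t : F), α * β₀ * s⁻¹ = t → α * β₀ = s * t := by
    intro α β₀ t ht
    rw [← div_eq_mul_inv, div_eq_iff hs0] at ht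
    rw [ht]; ring
  have hsingle : ∀ α β₀ : F, nu (A' - α • 1) * nu (B' - β₀ • 1)
      ≤ Fintype.card {i : Fin d // diag i = α * β₀ * s⁻¹} := by
    intro α β₀
    have h1 := hM1 (α * β₀ * s⁻¹) {α} (fun _ => β₀) ?_
    · simpa using h1
    · intro α' hα'
      rw [Finset.mem_singleton] at hα'
      subst hα'
      field_simp
  have hpair0 : ∀ α β₀ : F, α * β₀ ≠ s * 1 → α * β₀ ≠ s * ζc → α * β₀ ≠ s * ζi →
      nu (A' - α • 1) * nu (B' - β₀ • 1) = 0 := by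
    intro α β₀ h1 h2 h3
    have h4 := hsingle α β₀
    have h5 : Fintype.card {i : Fin d // diag i = α * β₀ * s⁻¹} = 0 := by
      apply card0
      · intro h; exact h1 (by rw [mul_one]; rw [← mul_one s]; exact hconv _ _ _ h)
      · intro h; exact h2 (hconv _ _ _ h)
      · intro h; exact h3 (hconv _ _ _ h)
    omega
  have hrow : ∀ α ∈ T, (∑ β₀ ∈ T, nu (A' - α • 1) * nu (B' - β₀ • 1))
      = ∑ t ∈ T, nu (A' - α • 1) * nu (B' - (s * t * α⁻¹) • 1) := by
    intro α hα
    have hα0 : α ≠ 0 := hT0 α hα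
    have hinj : ∀ x ∈ T, ∀ y ∈ T, s * x * α⁻¹ = s * y * α⁻¹ → x = y := by
      intro x _ y _ h
      have h2 := mul_right_cancel₀ (inv_ne_zero hα0) h
      exact mul_left_cancel₀ hs0 h2
    have himg : ∑ t ∈ T, nu (A' - α • 1) * nu (B' - (s * t * α⁻¹) • 1)
        = ∑ β₀ ∈ T.image (fun t => s * t * α⁻¹), nu (A' - α • 1) * nu (B' - β₀ • 1) :=
      (Finset.sum_image (f := fun β₀ => nu (A' - α • 1) * nu (B' - β₀ • 1)) hinj).symm
    rw [himg]
    have hsub1 : ∑ β₀ ∈ T, nu (A' - α • 1) * nu (B' - β₀ • 1)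
        = ∑ β₀ ∈ T ∩ T.image (fun t => s * t * α⁻¹), nu (A' - α • 1) * nu (B' - β₀ • 1) := by
      apply (Finset.sum_subset Finset.inter_subset_left ?_).symm
      intro β₀ hβ₀T hβ₀n
      have hβ₀T' : β₀ ∉ T.image (fun t => s * t * α⁻¹) := fun hc =>
        hβ₀n (Finset.mem_inter.mpr ⟨hβ₀T, hc⟩)
      have hne : ∀ t : F, t ∈ T → α * β₀ ≠ s * t := by
        intro t ht hc
        apply hβ₀T'
        apply Finset.mem_image.mpr
        refine ⟨t, ht, ?_⟩
        rw [← hc]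
        field_simp
      exact hpair0 α β₀ (hne 1 h1T) (hne ζc hζcT) (hne ζi hζiT)
    have hsub2 : ∑ β₀ ∈ T.image (fun t => s * t * α⁻¹), nu (A' - α • 1) * nu (B' - β₀ • 1)
        = ∑ β₀ ∈ T ∩ T.image (fun t => s * t * α⁻¹), nu (A' - α • 1) * nu (B' - β₀ • 1) := by
      apply (Finset.sum_subset Finset.inter_subset_right ?_).symm
      intro β₀ hβ₀T' hn
      have hβ₀T : β₀ ∉ T := fun hc => hn (Finset.mem_inter.mpr ⟨hc, hβ₀T'⟩)
      rw [hofff β₀ hβ₀T, Nat.mul_zero]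
    rw [hsub1, ← hsub2]
  have hEF : (∑ α ∈ T, nu (A' - α • 1)) * (∑ β₀ ∈ T, nu (B' - β₀ • 1))
      = ∑ t ∈ T, ∑ α ∈ T, nu (A' - α • 1) * nu (B' - (s * t * α⁻¹) • 1) := by
    rw [Finset.sum_mul_sum]
    rw [Finset.sum_congr rfl hrow]
    exact Finset.sum_comm
  have hsumT : ∀ h : F → ℕ, ∑ γ ∈ T, h γ = h 1 + h ζc + h ζi := by
    intro h
    rw [hTdef]
    rw [Finset.sum_insert (by
      simp only [Finset.mem_insert, Finset.mem_singleton]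
      push_neg
      exact ⟨Ne.symm hζc1, Ne.symm hζi1⟩)]
    rw [Finset.sum_insert (by simp only [Finset.mem_singleton]; exact hζcζi)]
    rw [Finset.sum_singleton]
    ring
  have hsa : a ≤ ∑ α ∈ T, nu (A' - α • 1) := by
    rw [hsumT]
    have h1 := sum_ker_ge A' 1 ζc ζi (Ne.symm hζc1) (Ne.symm hζi1) hζcζi hQA'
    rwa [Fintype.card_fin] at h1
  have hsb : b ≤ ∑ β₀ ∈ T, nu (B' - β₀ • 1) := by
    rw [hsumT]
    have h1 := sum_ker_ge B' 1 ζc ζi (Ne.symm hζc1) (Ne.symm hζi1) hζcζi hQB'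
    rwa [Fintype.card_fin] at h1
  have hprodT : ∀ t : F, ∀ α ∈ T, α * (s * t * α⁻¹) = s * t := by
    intro t α hα
    have hα0 : α ≠ 0 := hT0 α hα
    field_simp
  have hS1 : ∑ α ∈ T, nu (A' - α • 1) * nu (B' - (s * 1 * α⁻¹) • 1)
      ≤ Fintype.card {i : Fin d // diag i = 1} := hM1 1 T _ (hprodT 1)
  have hSζc : ∑ α ∈ T, nu (A' - α • 1) * nu (B' - (s * ζc * α⁻¹) • 1) ≤ 2 := by
    have h1 := hM1 ζc T _ (hprodT ζc)
    rwa [cardζc] at h1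
  have hSζi : ∑ α ∈ T, nu (A' - α • 1) * nu (B' - (s * ζi * α⁻¹) • 1) ≤ 2 := by
    have h1 := hM1 ζi T _ (hprodT ζi)
    rwa [cardζi] at h1
  have hsplitT := hsumT (fun t => ∑ α ∈ T, nu (A' - α • 1) * nu (B' - (s * t * α⁻¹) • 1))
  -- equalities
  have hEFle : (∑ α ∈ T, nu (A' - α • 1)) * (∑ β₀ ∈ T, nu (B' - β₀ • 1)) ≤ a * b := by
    rw [hEF, hsplitT]
    omega
  have hEFge : a * b ≤ (∑ α ∈ T, nu (A' - α • 1)) * (∑ β₀ ∈ T, nu (B' - β₀ • 1)) :=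
    Nat.mul_le_mul hsa hsb
  have hEFeq : (∑ α ∈ T, nu (A' - α • 1)) * (∑ β₀ ∈ T, nu (B' - β₀ • 1)) = a * b :=
    le_antisymm hEFle hEFge
  have hFb : (∑ β₀ ∈ T, nu (B' - β₀ • 1)) = b := by
    have h6 : a * (∑ β₀ ∈ T, nu (B' - β₀ • 1))
        ≤ (∑ α ∈ T, nu (A' - α • 1)) * (∑ β₀ ∈ T, nu (B' - β₀ • 1)) :=
      Nat.mul_le_mul_right _ hsa
    have h7 : a * b ≤ a * (∑ β₀ ∈ T, nu (B' - β₀ • 1)) := Nat.mul_le_mul_left a hsb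
    have h8 : a * (∑ β₀ ∈ T, nu (B' - β₀ • 1)) = a * b := by omega
    exact Nat.eq_of_mul_eq_mul_left (by omega) h8
  have hEa : (∑ α ∈ T, nu (A' - α • 1)) = a := by
    have h6 : (∑ α ∈ T, nu (A' - α • 1)) * b = a * b := by
      have h6' := hEFeq
      rw [hFb] at h6'
      exact h6'
    exact Nat.eq_of_mul_eq_mul_right (by omega) h6
  have heqs : (∑ α ∈ T, nu (A' - α • 1) * nu (B' - (s * 1 * α⁻¹) • 1))
        = Fintype.card {i : Fin d // diag i = 1}
      ∧ (∑ α ∈ T, nu (A' - α • 1) * nu (B' - (s * ζc * α⁻¹) • 1)) = 2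
      ∧ (∑ α ∈ T, nu (A' - α • 1) * nu (B' - (s * ζi * α⁻¹) • 1)) = 2 := by
    have h1 := hEF
    rw [hsplitT, hEFeq] at h1
    omega
  obtain ⟨hn1, hn2, hn3⟩ := heqs
  have hn1' : ∑ α ∈ T, nu (A' - α • 1) * nu (B' - (s * α⁻¹) • 1)
      = Fintype.card {i : Fin d // diag i = 1} := by
    rw [← hn1]
    apply Finset.sum_congr rfl
    intro α _
    rw [mul_one]
  have hB : ∑ α ∈ T, nu (A' - α • 1) * nu (B' - (s * α⁻¹) • 1) + 4 = a * b := by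
    rw [hn1']
    omega
  -- symmetric form
  have hinvol : ∀ γ : F, s * (s * γ⁻¹)⁻¹ = γ := by
    intro γ
    rcases eq_or_ne γ 0 with h | h
    · subst h; simp
    · field_simp
  have hsym : ∑ β₀ ∈ T, nu (B' - β₀ • 1) * nu (A' - (s * β₀⁻¹) • 1)
      = ∑ α ∈ T, nu (A' - α • 1) * nu (B' - (s * α⁻¹) • 1) := by
    have hVmap : ∀ γ ∈ T.filter (fun γ => s * γ⁻¹ ∈ T),
        s * γ⁻¹ ∈ T.filter (fun γ => s * γ⁻¹ ∈ T) := by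
      intro γ hγ
      rw [Finset.mem_filter] at hγ ⊢
      exact ⟨hγ.2, by rw [hinvol]; exact hγ.1⟩
    have h1 : ∑ α ∈ T, nu (A' - α • 1) * nu (B' - (s * α⁻¹) • 1)
        = ∑ α ∈ T.filter (fun γ => s * γ⁻¹ ∈ T), nu (A' - α • 1) * nu (B' - (s * α⁻¹) • 1) := by
      apply (Finset.sum_subset (Finset.filter_subset _ _) ?_).symm
      intro γ hγT hγn
      have hnm : s * γ⁻¹ ∉ T := by
        intro hc; exact hγn (Finset.mem_filter.mpr ⟨hγT, hc⟩)
      rw [hofff _ hnm, Nat.mul_zero]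
    have h2 : ∑ β₀ ∈ T, nu (B' - β₀ • 1) * nu (A' - (s * β₀⁻¹) • 1)
        = ∑ β₀ ∈ T.filter (fun γ => s * γ⁻¹ ∈ T),
            nu (B' - β₀ • 1) * nu (A' - (s * β₀⁻¹) • 1) := by
      apply (Finset.sum_subset (Finset.filter_subset _ _) ?_).symm
      intro γ hγT hγn
      have hnm : s * γ⁻¹ ∉ T := by
        intro hc; exact hγn (Finset.mem_filter.mpr ⟨hγT, hc⟩)
      rw [hoffe _ hnm, Nat.mul_zero]
    have h3 : ∑ β₀ ∈ T.filter (fun γ => s * γ⁻¹ ∈ T),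
          nu (B' - β₀ • 1) * nu (A' - (s * β₀⁻¹) • 1)
        = ∑ α ∈ T.filter (fun γ => s * γ⁻¹ ∈ T), nu (A' - α • 1) * nu (B' - (s * α⁻¹) • 1) := by
      apply Finset.sum_nbij' (i := fun β₀ => s * β₀⁻¹) (j := fun α => s * α⁻¹)
        hVmap hVmap (fun γ _ => hinvol γ) (fun γ _ => hinvol γ)
      intro β₀ _
      rw [hinvol]
      ring
    rw [h2, h3, ← h1]
  have hB' : ∑ β₀ ∈ T, nu (B' - β₀ • 1) * nu (A' - (s * β₀⁻¹) • 1) + 4 = a * b := by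
    rw [hsym]
    exact hB
  -- existence of a small positive pair
  have hCex : ∃ α₁ ∈ T, nu (A' - α₁ • 1) * nu (B' - (s * ζc * α₁⁻¹) • 1) ≠ 0 := by
    by_contra hcon
    push_neg at hcon
    have h0' : ∑ α ∈ T, nu (A' - α • 1) * nu (B' - (s * ζc * α⁻¹) • 1) = 0 :=
      Finset.sum_eq_zero fun α hα => hcon α hα
    omega
  obtain ⟨α₁, hα₁T, hα₁ne⟩ := hCex
  have hterm : nu (A' - α₁ • 1) * nu (B' - (s * ζc * α₁⁻¹) • 1) ≤ 2 := by
    rw [← hn2]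
    exact Finset.single_le_sum
      (f := fun α => nu (A' - α • 1) * nu (B' - (s * ζc * α⁻¹) • 1))
      (fun i _ => Nat.zero_le _) hα₁T
  have he1 : 1 ≤ nu (A' - α₁ • 1) :=
    Nat.pos_of_ne_zero fun h => hα₁ne (by rw [h, Nat.zero_mul])
  have hf1 : 1 ≤ nu (B' - (s * ζc * α₁⁻¹) • 1) :=
    Nat.pos_of_ne_zero fun h => hα₁ne (by rw [h, Nat.mul_zero])
  have hβ₁T : s * ζc * α₁⁻¹ ∈ T := by
    by_contra hc
    rw [hofff _ hc] at hf1
    omega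
  exact endgame T (fun γ => nu (A' - γ • 1)) (fun γ => nu (B' - γ • 1)) s a b hs0
    hEa hFb hB hB' hoffe hofff
    ⟨α₁, hα₁T, s * ζc * α₁⁻¹, hβ₁T, he1, hf1, hterm⟩ ha3 hb3 (by omega)
end

section
/- For every m ≥ 3 and every square prime power q, the subfield of 𝔽_q generated over 𝔽_p by {tr(g) : g ∈ SU_m(𝔽_q)} equals 𝔽_q, where SU_m(𝔽_q) is the special unitary group with respect to the involution x ↦ x^{√q} of 𝔽_q. -/
open Matrix
/-- For `m ≥ 3` and a finite field `F = 𝔽_q` with `q = u²` a square, the subfield generated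
(over the prime field) by the traces of elements of the special unitary group
`SU_m(F)` — the elements `g` of `SL_m(F)` satisfying `(g^{(u)})ᵀ * g = 1` where `x ↦ x^u`
is the involutive automorphism of `F` — is all of `F`. -/
theorem stmt_9 (F : Type*) [Field F] [Fintype F] (u m : ℕ)
    (hq : Fintype.card F = u ^ 2) (hm : 3 ≤ m) :
    Subfield.closure {x : F | ∃ g : Matrix.SpecialLinearGroup (Fin m) F,
      ((g : Matrix (Fin m) (Fin m) F).map (fun a => a ^ u))ᵀ * (g : Matrix (Fin m) (Fin m) F) = 1 ∧
      x = Matrix.trace (g : Matrix (Fin m) (Fin m) F)} = ⊤ := by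
  classical
  set S := {x : F | ∃ g : Matrix.SpecialLinearGroup (Fin m) F,
      ((g : Matrix (Fin m) (Fin m) F).map (fun a => a ^ u))ᵀ * (g : Matrix (Fin m) (Fin m) F) = 1 ∧
      x = Matrix.trace (g : Matrix (Fin m) (Fin m) F)} with hS
  set K := Subfield.closure S with hK
  -- basic bounds on u
  have hcard1 : 1 < Fintype.card F := Fintype.one_lt_card
  have hu2 : 2 ≤ u := by
    by_contra h
    interval_cases u <;> simp_all
  have hu0 : u ≠ 0 := by omega
  -- Step 1: traces of diagonal special unitary matrices
  have key : ∀ a b c : F, a ^ (u + 1) = 1 → b ^ (u + 1) = 1 → c ^ (u + 1) = 1 →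
      a * b * c = 1 → a + b + c ∈ K := by
    intro a b c ha hb hc habc
    set i0 : Fin m := ⟨0, by omega⟩
    set i1 : Fin m := ⟨1, by omega⟩
    set i2 : Fin m := ⟨2, by omega⟩
    have h01 : i0 ≠ i1 := by simp [i0, i1, Fin.ext_iff]
    have h02 : i0 ≠ i2 := by simp [i0, i2, Fin.ext_iff]
    have h12 : i1 ≠ i2 := by simp [i1, i2, Fin.ext_iff]
    set d : Fin m → F := fun i => if i = i0 then a else if i = i1 then b else
      if i = i2 then c else 1 with hd
    set s : Finset (Fin m) := {i0, i1, i2} with hs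
    have hsc : s.card = 3 := by
      rw [hs, Finset.card_insert_of_notMem (by simp [h01, h02]),
        Finset.card_insert_of_notMem (by simp [h12]), Finset.card_singleton]
    have hd_out : ∀ i ∉ s, d i = 1 := by
      intro i hi
      simp only [hs, Finset.mem_insert, Finset.mem_singleton, not_or] at hi
      simp [hd, hi.1, hi.2.1, hi.2.2]
    have hds : ∑ i ∈ s, d i = a + b + c := by
      rw [hs, Finset.sum_insert (by simp [h01, h02]), Finset.sum_insert (by simp [h12]),
        Finset.sum_singleton]
      simp [hd, h01, h02, h12, h01.symm, h02.symm, h12.symm, add_assoc]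
    have hpow : ∀ i, d i ^ (u + 1) = 1 := by
      intro i
      simp only [hd]
      split_ifs <;> simp [ha, hb, hc]
    have hdet : (Matrix.diagonal d).det = 1 := by
      rw [Matrix.det_diagonal]
      rw [← Finset.prod_subset (Finset.subset_univ s) (fun i _ hi => hd_out i hi)]
      rw [hs, Finset.prod_insert (by simp [h01, h02]), Finset.prod_insert (by simp [h12]),
        Finset.prod_singleton]
      rw [mul_assoc] at habc
      simpa [hd, h01, h02, h12, h01.symm, h02.symm, h12.symm] using habc
    set g : Matrix.SpecialLinearGroup (Fin m) F := ⟨Matrix.diagonal d, hdet⟩ with hg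
    have hunit : ((g : Matrix (Fin m) (Fin m) F).map (fun a => a ^ u))ᵀ *
        (g : Matrix (Fin m) (Fin m) F) = 1 := by
      have hcoe : (g : Matrix (Fin m) (Fin m) F) = Matrix.diagonal d := rfl
      have hmap : (Matrix.diagonal d).map (fun a => a ^ u)
          = Matrix.diagonal (fun i => d i ^ u) := by
        ext i j
        by_cases h : i = j <;>
          simp [Matrix.map_apply, Matrix.diagonal_apply, h, zero_pow hu0]
      rw [hcoe, hmap, Matrix.diagonal_transpose, Matrix.diagonal_mul_diagonal]
      have : (fun i => d i ^ u * d i) = fun _ => (1 : F) := by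
        funext i
        rw [← pow_succ]
        exact hpow i
      rw [this]
      exact Matrix.diagonal_one
    have htr : Matrix.trace (g : Matrix (Fin m) (Fin m) F) = a + b + c + ((m - 3 : ℕ) : F) := by
      have hcoe : (g : Matrix (Fin m) (Fin m) F) = Matrix.diagonal d := rfl
      rw [hcoe, Matrix.trace_diagonal]
      rw [← Finset.sum_sdiff (Finset.subset_univ s), hds]
      have : ∑ i ∈ Finset.univ \ s, d i = ((m - 3 : ℕ) : F) := by
        rw [Finset.sum_congr rfl (fun i hi => hd_out i (Finset.mem_sdiff.mp hi).2)]
        rw [Finset.sum_const, nsmul_eq_mul, mul_one]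
        congr 1
        rw [Finset.card_sdiff_of_subset (Finset.subset_univ s), hsc, Finset.card_univ, Fintype.card_fin]
      rw [this]
      ring
    have hmem : Matrix.trace (g : Matrix (Fin m) (Fin m) F) ∈ K :=
      Subfield.subset_closure ⟨g, hunit, rfl⟩
    have : a + b + c = Matrix.trace (g : Matrix (Fin m) (Fin m) F) - ((m - 3 : ℕ) : F) := by
      rw [htr]; ring
    rw [this]
    exact sub_mem hmem (natCast_mem K _)
  -- Step 2: (1-x)(1-y) ∈ K for norm-one x, y
  have hK1 : ∀ x y : F, x ^ (u + 1) = 1 → y ^ (u + 1) = 1 → (1 - x) * (1 - y) ∈ K := by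
    intro x y hx hy
    have hx0 : x ≠ 0 := by
      intro h; rw [h, zero_pow (by omega : u + 1 ≠ 0)] at hx; exact zero_ne_one hx
    have hy0 : y ≠ 0 := by
      intro h; rw [h, zero_pow (by omega : u + 1 ≠ 0)] at hy; exact zero_ne_one hy
    have hxy : (x * y) ^ (u + 1) = 1 := by rw [mul_pow, hx, hy, one_mul]
    have hinv : ((x * y)⁻¹) ^ (u + 1) = 1 := by rw [inv_pow, hxy, inv_one]
    have h1 : (x * y) + 1 + (x * y)⁻¹ ∈ K :=
      key _ _ _ hxy (one_pow _) hinv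
        (by rw [mul_one]; exact mul_inv_cancel₀ (mul_ne_zero hx0 hy0))
    have h2 : x + y + (x * y)⁻¹ ∈ K :=
      key _ _ _ hx hy hinv
        (by exact mul_inv_cancel₀ (mul_ne_zero hx0 hy0))
    have : (1 - x) * (1 - y) = ((x * y) + 1 + (x * y)⁻¹) - (x + y + (x * y)⁻¹) := by ring
    rw [this]
    exact sub_mem h1 h2
  -- Step 3: find a primitive (u+1)-th root of unity
  obtain ⟨g, hg⟩ := IsCyclic.exists_generator (α := Fˣ)
  have hog : orderOf g = u ^ 2 - 1 := by
    rw [orderOf_eq_card_of_forall_mem_zpowers hg, Nat.card_eq_fintype_card,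
      Fintype.card_units, hq]
  set ζ : Fˣ := g ^ (u - 1) with hζ
  have hfac : u ^ 2 - 1 = (u - 1) * (u + 1) := by
    rw [← one_pow 2, sq_tsub_sq, one_pow]
    ring_nf
  have hoζ : orderOf ζ = u + 1 := by
    rw [hζ, orderOf_pow, hog, hfac, Nat.gcd_eq_right ⟨u + 1, rfl⟩,
      Nat.mul_div_cancel_left _ (by omega : 0 < u - 1)]
  have hζpow : ∀ k : ℕ, ((ζ : F) ^ k) ^ (u + 1) = 1 := by
    intro k
    have : (ζ ^ (u + 1) : Fˣ) = 1 := by rw [← hoζ]; exact pow_orderOf_eq_one ζ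
    rw [← pow_mul, mul_comm, pow_mul, ← Units.val_pow_eq_pow_val, this, Units.val_one, one_pow]
  have hζne : (ζ : F) ≠ 1 := by
    intro h
    have : ζ = 1 := Units.ext (by simpa using h)
    rw [this, orderOf_one] at hoζ
    omega
  have ha0 : (1 - (ζ : F)) ≠ 0 := sub_ne_zero.mpr (Ne.symm hζne)
  -- Step 4: K contains at least u + 1 elements
  haveI : Fintype ↥K := Fintype.ofFinite ↥K
  have hcK : u + 1 ≤ Fintype.card ↥K := by
    have hmemk : ∀ k : ℕ, (1 - (ζ : F)) * (1 - (ζ : F) ^ k) ∈ K := fun k =>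
      hK1 _ _ (by simpa using hζpow 1) (hζpow k)
    set f : Fin (u + 1) → ↥K := fun k => ⟨(1 - (ζ : F)) * (1 - (ζ : F) ^ (k : ℕ)), hmemk k⟩
      with hf
    have hinj : Function.Injective f := by
      intro k j h
      rw [hf, Subtype.mk_eq_mk] at h
      have h2 : (1 - (ζ : F) ^ (k : ℕ)) = (1 - (ζ : F) ^ (j : ℕ)) := mul_left_cancel₀ ha0 h
      have h3 : (ζ : F) ^ (k : ℕ) = (ζ : F) ^ (j : ℕ) := by linear_combination -h2
      have h4 : ζ ^ (k : ℕ) = ζ ^ (j : ℕ) := Units.ext (by push_cast; exact h3)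
      have h5 : (k : ℕ) = (j : ℕ) :=
        pow_injOn_Iio_orderOf (by simp [hoζ, k.isLt]) (by simp [hoζ, j.isLt]) h4
      exact Fin.ext h5
    simpa using Fintype.card_le_of_injective f hinj
  -- Step 5: counting argument
  have hpow : Fintype.card F = Fintype.card ↥K ^ Module.finrank ↥K F :=
    Module.card_eq_pow_finrank
  rcases Nat.lt_or_ge (Module.finrank ↥K F) 2 with hr | hr
  · interval_cases h : Module.finrank ↥K F
    · rw [pow_zero] at hpow; omega
    · -- finrank = 1 : K has the same cardinality as F, hence K = ⊤
      rw [pow_one] at hpow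
      have hsurj : Function.Surjective (Subtype.val : ↥K → F) :=
        ((Fintype.bijective_iff_injective_and_card _).mpr
          ⟨Subtype.val_injective, hpow.symm⟩).surjective
      refine eq_top_iff.mpr fun x _ => ?_
      obtain ⟨⟨y, hy⟩, rfl⟩ := hsurj x
      exact hy
  · exfalso
    have h1 : (u + 1) ^ 2 ≤ Fintype.card ↥K ^ 2 := Nat.pow_le_pow_left hcK 2
    have h2 : Fintype.card ↥K ^ 2 ≤ Fintype.card ↥K ^ Module.finrank ↥K F :=
      Nat.pow_le_pow_right (by omega) hr
    have h3 : u ^ 2 < (u + 1) ^ 2 := Nat.pow_lt_pow_left (by omega) (by omega)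
    omega
end

section
/- Let q = u² be a square prime power, φ a nondegenerate bilinear form and ψ a nondegenerate hermitian form (for the involution x ↦ x^u) on 𝔽_q^N, and suppose G ⊆ O(φ) ∩ U(ψ) ⊆ GL_N(𝔽_q) acts absolutely irreducibly on 𝔽_q^N. Then there exists x ∈ GL_N(𝔽_q) and a nondegenerate bilinear form φ' on 𝔽_u^N such that xGx⁻¹ ⊆ Isom(φ') ⊆ GL_N(𝔽_u); moreover φ' is symmetric iff φ is symmetric, and skew-symmetric iff φ is skew-symmetric. -/
/-!
Write `Mᵠ` for the entrywise image of a matrix under `σ : a ↦ a ^ u`, an involution of `F`.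
The two invariant forms combine into `C = (Wᵠ)⁻¹ D`, which intertwines `g` with `gᵠ` for all
`g ∈ G`. By Schur's lemma `Cᵠ C` is a `σ`-fixed scalar, hence a norm `σ μ * μ`, so `C` can be
rescaled to a cocycle `C Cᵠ = 1`. Hilbert 90 writes `C = y (yᵠ)⁻¹`, and conjugating by `(yᵠ)⁻¹`
makes every element of `G` `σ`-fixed, i.e. defined over `𝔽_u`. The transported form `W₁` is
then invariant together with `W₁ᵠ`, so Schur gives `W₁ᵠ = c W₁` with `σ c * c = 1`, and Hilbert 90
for `c` rescales `W₁` to a `σ`-fixed form; rescaling and congruence preserve (skew-)symmetry.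
-/

open Matrix

theorem IsCyclic.exists_pow_eq_of_pow_eq_one {G : Type*} [Group G] [IsCyclic G] [Finite G]
    {a b : ℕ} (hcard : Nat.card G = a * b) {y : G} (hy : y ^ b = 1) : ∃ x : G, x ^ a = y := by
  obtain ⟨g, hg⟩ := IsCyclic.exists_monoid_generator (α := G)
  obtain ⟨k, rfl⟩ := hg y
  have hb : 0 < b := Nat.pos_of_ne_zero (right_ne_zero_of_mul (hcard ▸ Nat.card_pos.ne'))
  have hdvd : a * b ∣ k * b := by
    rw [← hcard, ← orderOf_eq_card_of_forall_mem_powers hg]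
    exact orderOf_dvd_of_pow_eq_one (by rwa [pow_mul])
  obtain ⟨m, rfl⟩ := Nat.dvd_of_mul_dvd_mul_right hb hdvd
  exact ⟨g ^ m, by rw [← pow_mul, mul_comm]⟩

namespace FiniteField

variable {F : Type*} [Field F] [Fintype F] {u : ℕ}

theorem exists_ringHom_eq_pow (hq : Fintype.card F = u ^ 2) :
    ∃ σ : F →+* F, ⇑σ = fun x => x ^ u := by
  obtain ⟨n, hp, hcard⟩ := FiniteField.card F (ringChar F)
  obtain ⟨m, -, rfl⟩ := (Nat.dvd_prime_pow hp).1 (Dvd.intro_left u (by rw [← hcard, hq, sq]))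
  have : ExpChar F (ringChar F) := ExpChar.prime hp
  exact ⟨iterateFrobenius F (ringChar F) m, funext fun x => iterateFrobenius_def ..⟩

theorem pow_pow_eq_self (hq : Fintype.card F = u ^ 2) (x : F) : (x ^ u) ^ u = x := by
  rw [← pow_mul, ← sq, ← hq, FiniteField.pow_card]

theorem two_le_of_card_eq_sq (hq : Fintype.card F = u ^ 2) : 2 ≤ u := by
  have : 1 < u ^ 2 := hq ▸ Fintype.one_lt_card
  by_contra! h
  interval_cases u <;> simp at this

theorem exists_pow_ne_self (hq : Fintype.card F = u ^ 2) : ∃ α : F, α ^ u ≠ α := by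
  have hu := two_le_of_card_eq_sq hq
  obtain ⟨g, hg⟩ := IsCyclic.exists_ofOrder_eq_natCard (α := Fˣ)
  refine ⟨g, fun h => pow_ne_one_of_lt_orderOf (x := g) (n := u - 1) (by omega) ?_ ?_⟩
  · rw [hg, Nat.card_units, Nat.card_eq_fintype_card, hq]
    exact Nat.sub_lt_sub_right (by omega) (by nlinarith)
  · refine mul_right_cancel (b := g) ?_
    rw [← pow_succ, Nat.sub_add_cancel (by omega), one_mul]
    exact Units.ext h

theorem exists_pow_mul_self_eq (hq : Fintype.card F = u ^ 2) {c : F} (hc : c ≠ 0)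
    (hcu : c ^ u = c) : ∃ μ : F, μ ^ u * μ = c := by
  have hu := two_le_of_card_eq_sq hq
  have hcard : Nat.card Fˣ = (u + 1) * (u - 1) := by
    rw [Nat.card_units, Nat.card_eq_fintype_card, hq, ← Nat.sq_sub_sq, one_pow]
  obtain ⟨μ, hμ⟩ := IsCyclic.exists_pow_eq_of_pow_eq_one hcard (y := Units.mk0 c hc) <| by
    refine mul_right_cancel (b := Units.mk0 c hc) ?_
    rw [← pow_succ, Nat.sub_add_cancel (by omega), one_mul]
    exact Units.ext hcu
  exact ⟨μ, by rw [← pow_succ, ← Units.val_pow_eq_pow_val, hμ, Units.val_mk0]⟩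

end FiniteField

section Involution

variable {F : Type*} [Field F] {σ : F →+* F}

theorem exists_ne_zero_map_mul_eq (hσ : Function.Involutive σ) {α : F} (hα : σ α ≠ α) {c : F}
    (hc : σ c * c = 1) : ∃ e : F, e ≠ 0 ∧ σ e * c = e := by
  by_cases hc1 : 1 + c = 0
  · refine ⟨α - σ α, sub_ne_zero.2 hα.symm, ?_⟩
    rw [map_sub, hσ α, eq_neg_of_add_eq_zero_right hc1]
    ring
  · exact ⟨1 + c, hc1, by rw [map_add, map_one, add_mul, one_mul, hc, add_comm]⟩

/-- `v` is a combination of the fixed vectors `a • v + σ a • T v` for `a = 1` and `a = α`. -/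
theorem LinearMap.span_fixedPoints_eq_top {M : Type*} [AddCommGroup M] [Module F M]
    (hσ : Function.Involutive σ) {α : F} (hα : σ α ≠ α) (T : M →ₛₗ[σ] M) (hT : ∀ v, T (T v) = v) :
    Submodule.span F (Function.fixedPoints T) = ⊤ := by
  refine Submodule.eq_top_iff'.2 fun v => ?_
  have hfix (a : F) : a • v + σ a • T v ∈ Function.fixedPoints T := by
    simp only [Function.mem_fixedPoints, Function.IsFixedPt, map_add, LinearMap.map_smulₛₗ, hT,
      hσ a, add_comm]
  have hv : v = (σ α - α)⁻¹ • (σ α • ((1 : F) • v + σ 1 • T v) - (α • v + σ α • T v)) := by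
    rw [map_one, one_smul, one_smul, smul_add, add_sub_add_right_eq_sub, ← sub_smul, smul_smul,
      inv_mul_cancel₀ (sub_ne_zero.2 hα), one_smul]
  rw [hv]
  exact Submodule.smul_mem _ _ <| Submodule.sub_mem _
    (Submodule.smul_mem _ _ (Submodule.subset_span (hfix 1))) (Submodule.subset_span (hfix α))

theorem Matrix.map_map_of_involutive {n : Type*} (hσ : Function.Involutive σ) (M : Matrix n n F) :
    (M.map σ).map σ = M := by
  ext; exact hσ _

variable {n : Type*} [Fintype n] [DecidableEq n]

def Matrix.mulVecₛₗ (σ : F →+* F) (C : Matrix n n F) : (n → F) →ₛₗ[σ] (n → F) where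
  toFun v := C *ᵥ (σ ∘ v)
  map_add' v w := by
    simp only [← mulVec_add]; congr 1; ext; simp
  map_smul' a v := by
    simp only [← mulVec_smul]; congr 1; ext; simp

/-- Hilbert's Theorem 90 for `GL_n`. -/
theorem Matrix.exists_mul_map_eq (hσ : Function.Involutive σ) {α : F} (hα : σ α ≠ α)
    {C : Matrix n n F} (hC : C * C.map σ = 1) : ∃ y : GL n F, C * (y : Matrix n n F).map σ = y := by
  set T := C.mulVecₛₗ σ
  have hT (v : n → F) : T (T v) = v := by
    have : σ ∘ (C *ᵥ (σ ∘ v)) = C.map σ *ᵥ v := by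
      ext i; rw [Function.comp_apply, RingHom.map_mulVec]; congr; ext; exact hσ _
    simp [T, Matrix.mulVecₛₗ, this, mulVec_mulVec, hC]
  have hspan := LinearMap.span_fixedPoints_eq_top hσ hα T hT
  let b₀ := Module.Basis.ofSpan hspan.ge
  let b := b₀.reindex (b₀.indexEquiv (Pi.basisFun F n))
  have hb (j : n) : T (b j) = b j := by
    have : b j ∈ Set.range b₀ := by simp [b]
    exact Module.Basis.ofSpan_subset hspan.ge this
  have hy : IsUnit (Matrix.of b)ᵀ :=
    (isUnit_transpose _).2 (linearIndependent_rows_iff_isUnit.1 b.linearIndependent)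
  refine ⟨hy.unit, ?_⟩
  ext i j
  simpa [T, Matrix.mulVecₛₗ, mul_apply, mulVec, dotProduct] using congrFun (hb j) i

end Involution

section Descent

variable {n : Type*} [Fintype n] [DecidableEq n] {F : Type*} [Field F]

/-- By Burnside's theorem, `G ≤ GL_n(F)` is absolutely irreducible iff it spans `M_n(F)`. -/
def SpansMatrices (G : Subgroup (GL n F)) : Prop :=
  Submodule.span F {m : Matrix n n F | ∃ g ∈ G, m = (g : Matrix n n F)} = ⊤

namespace SpansMatrices

variable {G : Subgroup (GL n F)}

theorem exists_eq_smul_one (hG : SpansMatrices G) {X : Matrix n n F}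
    (hX : ∀ g ∈ G, Commute X (g : Matrix n n F)) : ∃ c : F, X = c • 1 := by
  have hcomm (m : Matrix n n F) : Commute X m := by
    have hm : m ∈ Submodule.span F {m : Matrix n n F | ∃ g ∈ G, m = (g : Matrix n n F)} :=
      hG ▸ Submodule.mem_top
    induction hm using Submodule.span_induction with
    | mem _ h => obtain ⟨g, hg, rfl⟩ := h; exact hX g hg
    | zero => exact Commute.zero_right X
    | add _ _ _ _ h₁ h₂ => exact h₁.add_right h₂
    | smul a _ _ h => exact h.smul_right a
  obtain ⟨c, hc⟩ := mem_range_scalar_of_commute_single fun i j _ => (hcomm _).symm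
  exact ⟨c, by rw [← hc, smul_one_eq_diagonal, scalar_apply]⟩

theorem map_conj (hG : SpansMatrices G) (x : GL n F) :
    SpansMatrices (G.map (MulAut.conj x).toMonoidHom) := by
  let f : Matrix n n F →ₗ[F] Matrix n n F :=
    LinearMap.mulLeft F (x : Matrix n n F) ∘ₗ LinearMap.mulRight F ((x⁻¹ : GL n F) : Matrix n n F)
  have hf : Function.Surjective f := fun m =>
    ⟨(x⁻¹ : GL n F) * m * x, by simp [f, ← mul_assoc]⟩
  have himage : {m : Matrix n n F | ∃ h ∈ G.map (MulAut.conj x).toMonoidHom, m = h} =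
      f '' {m : Matrix n n F | ∃ g ∈ G, m = g} := by
    ext m
    simp [f, mul_assoc, eq_comm]
  rw [SpansMatrices, himage, Submodule.span_image, hG, Submodule.map_top,
    LinearMap.range_eq_top.2 hf]

end SpansMatrices

end Descent

section Forms

variable {n : Type*} [Fintype n] [DecidableEq n] {R : Type*} [CommRing R]

theorem Matrix.inv_mul_mul_eq_mul_inv_mul {A B P Q : Matrix n n R} (hA : IsUnit A) (hP : IsUnit P)
    (hPA : Pᵀ * A * P = A) (hPB : Pᵀ * B * Q = B) : A⁻¹ * B * Q = P * (A⁻¹ * B) := by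
  have hAdet := (isUnit_iff_isUnit_det A).1 hA
  have hPdet := (isUnit_iff_isUnit_det P).1 hP
  have hinv : P * A⁻¹ * Pᵀ = A⁻¹ := by
    refine (inv_eq_left_inv ?_).symm
    calc P * A⁻¹ * Pᵀ * A = P * A⁻¹ * (Pᵀ * A * P) * P⁻¹ := by
          simp only [Matrix.mul_assoc, mul_nonsing_inv _ hPdet, Matrix.mul_one]
      _ = 1 := by
          rw [hPA, Matrix.mul_assoc P, nonsing_inv_mul _ hAdet, Matrix.mul_one,
            mul_nonsing_inv _ hPdet]
  calc A⁻¹ * B * Q = P * A⁻¹ * (Pᵀ * B * Q) := by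
        conv_lhs => rw [← hinv]
        simp only [Matrix.mul_assoc]
    _ = P * (A⁻¹ * B) := by rw [hPB, Matrix.mul_assoc]

theorem Matrix.transpose_mul_mul_conj {P P' g W : Matrix n n R} (hP : P' * P = 1)
    (hg : gᵀ * W * g = W) :
    (P * g * P')ᵀ * (P'ᵀ * W * P') * (P * g * P') = P'ᵀ * W * P' := by
  have hPt : Pᵀ * P'ᵀ = 1 := by rw [← transpose_mul, hP, transpose_one]
  calc (P * g * P')ᵀ * (P'ᵀ * W * P') * (P * g * P')
      = P'ᵀ * (gᵀ * (Pᵀ * P'ᵀ) * W * (P' * P) * g) * P' := by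
        simp only [transpose_mul, Matrix.mul_assoc]
    _ = P'ᵀ * W * P' := by rw [hPt, hP, Matrix.mul_one, Matrix.mul_one, hg]

theorem Matrix.transpose_smul_congr_eq_smul_iff {F : Type*} [Field F] {P W : Matrix n n F}
    (hP : IsUnit P) {e : F} (he : e ≠ 0) (c : F) :
    (e • (Pᵀ * W * P))ᵀ = c • e • (Pᵀ * W * P) ↔ Wᵀ = c • W := by
  have hPt : IsUnit Pᵀ := (isUnit_transpose P).2 hP
  have hT : (e • (Pᵀ * W * P))ᵀ = e • (Pᵀ * Wᵀ * P) := by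
    rw [transpose_smul, transpose_mul, transpose_mul, transpose_transpose, Matrix.mul_assoc]
  have hc : c • e • (Pᵀ * W * P) = e • (Pᵀ * (c • W) * P) := by
    rw [smul_comm, Matrix.mul_smul, Matrix.smul_mul]
  rw [hT, hc, (smul_right_injective _ he).eq_iff, hP.mul_left_inj, hPt.mul_right_inj]

end Forms

section GaloisDescent

variable {n : Type*} [Fintype n] [DecidableEq n] {F : Type*} [Field F] {σ : F →+* F}

theorem exists_mul_map_eq_one_of_intertwines [Nonempty n] (hσ : Function.Involutive σ)
    (hnorm : ∀ c : F, c ≠ 0 → σ c = c → ∃ μ, σ μ * μ = c) {G : Subgroup (GL n F)}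
    (hG : SpansMatrices G) {C : Matrix n n F} (hCu : IsUnit C)
    (hC : ∀ g ∈ G, C * g = (g : Matrix n n F).map σ * C) :
    ∃ C' : Matrix n n F, C' * C'.map σ = 1 ∧ ∀ g ∈ G, C' * g = (g : Matrix n n F).map σ * C' := by
  have hX : ∀ g ∈ G, Commute (C.map σ * C) g := fun g hg => by
    calc C.map σ * C * g = (C * g).map σ * C := by
          rw [Matrix.map_mul, Matrix.mul_assoc, Matrix.mul_assoc, hC g hg]
      _ = g * (C.map σ * C) := by
          rw [hC g hg, Matrix.map_mul, Matrix.map_map_of_involutive hσ, Matrix.mul_assoc]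
  obtain ⟨l, hl⟩ := hG.exists_eq_smul_one hX
  have hl' : C * C.map σ = l • 1 :=
    hCu.mul_right_cancel (by rw [Matrix.mul_assoc, hl, Matrix.smul_mul, Matrix.mul_smul,
      Matrix.one_mul, Matrix.mul_one])
  have hlσ : σ l = l := by
    have := congrArg (Matrix.map · σ) hl
    simp only [Matrix.map_mul, Matrix.map_map_of_involutive hσ, hl', map_smul' _ _ _ (map_mul σ),
      Matrix.map_one σ (map_zero σ) (map_one σ)] at this
    exact smul_left_injective F one_ne_zero this.symm
  have hl0 : l ≠ 0 := by
    rintro rfl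
    exact not_isUnit_zero (zero_smul F (1 : Matrix n n F) ▸ hl' ▸ hCu.mul (hCu.map σ.mapMatrix))
  obtain ⟨μ, hμ⟩ := hnorm l hl0 hlσ
  have hμ0 : μ ≠ 0 := by rintro rfl; simp [eq_comm, hl0] at hμ
  refine ⟨μ⁻¹ • C, ?_, fun g hg => by rw [smul_mul_assoc, hC g hg, mul_smul_comm]⟩
  rw [map_smul' _ _ _ (map_mul σ), smul_mul_smul, hl', smul_smul, ← hμ, map_inv₀,
    show μ⁻¹ * (σ μ)⁻¹ * (σ μ * μ) = 1 by field_simp [(map_ne_zero σ).2 hμ0], one_smul]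

theorem exists_conj_map_eq_self (hσ : Function.Involutive σ) {α : F} (hα : σ α ≠ α)
    {G : Subgroup (GL n F)} {C : Matrix n n F} (hC1 : C * C.map σ = 1)
    (hC : ∀ g ∈ G, C * g = (g : Matrix n n F).map σ * C) :
    ∃ x : GL n F, ∀ g ∈ G,
      GeneralLinearGroup.map σ (x * g * x⁻¹) = x * g * x⁻¹ := by
  obtain ⟨y, hy⟩ := Matrix.exists_mul_map_eq hσ hα hC1
  set φ : GL n F →* GL n F := GeneralLinearGroup.map σ
  have hφ (g : GL n F) : φ (φ g) = g := Units.ext (Matrix.map_map_of_involutive hσ _)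
  have hCy : (y : Matrix n n F) * ((φ y)⁻¹ : GL n F) = C := by
    rw [← hy, Matrix.mul_assoc]
    change C * ((φ y : Matrix n n F) * ((φ y)⁻¹ : GL n F)) = C
    rw [Units.mul_inv, Matrix.mul_one]
  refine ⟨(φ y)⁻¹, fun g hg => ?_⟩
  have hint : φ g = y * (φ y)⁻¹ * g * (y * (φ y)⁻¹)⁻¹ := by
    refine eq_mul_inv_of_mul_eq (Units.ext ?_).symm
    simp only [Units.val_mul]
    rw [hCy, hC g hg]
    rfl
  simp only [map_mul, map_inv, hφ]
  rw [hint]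
  group

theorem exists_ne_zero_smul_map_eq [Nonempty n] (hσ : Function.Involutive σ) {α : F} (hα : σ α ≠ α)
    {H : Subgroup (GL n F)} (hH : SpansMatrices H)
    (hfix : ∀ h ∈ H, (h : Matrix n n F).map σ = h) {W : Matrix n n F} (hW : IsUnit W)
    (hHW : ∀ h ∈ H, (h : Matrix n n F)ᵀ * W * h = W) :
    ∃ e : F, e ≠ 0 ∧ (e • W).map σ = e • W := by
  have hHWσ : ∀ h ∈ H, (h : Matrix n n F)ᵀ * W.map σ * h = W.map σ := fun h hh => by
    rw [← hfix h hh, ← transpose_map, ← Matrix.map_mul, ← Matrix.map_mul, hHW h hh]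
  obtain ⟨c, hc⟩ := hH.exists_eq_smul_one (X := W⁻¹ * W.map σ) fun h hh =>
    Matrix.inv_mul_mul_eq_mul_inv_mul hW h.isUnit (hHW h hh) (hHWσ h hh)
  have hWc : W.map σ = c • W := by
    rw [← mul_nonsing_inv_cancel_left W (W.map σ) ((isUnit_iff_isUnit_det W).1 hW), hc,
      Matrix.mul_smul, Matrix.mul_one]
  have hcc : σ c * c = 1 := by
    have := Matrix.map_map_of_involutive hσ W
    rw [hWc, map_smul' _ _ _ (map_mul σ), hWc, smul_smul] at this
    exact smul_left_injective F hW.ne_zero (this.trans (one_smul F W).symm)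
  obtain ⟨e, he, hec⟩ := exists_ne_zero_map_mul_eq hσ hα hcc
  exact ⟨e, he, by rw [map_smul' _ _ _ (map_mul σ), hWc, smul_smul, hec]⟩

theorem exists_map_eq_self_of_conj_map_eq_self [Nonempty n] (hσ : Function.Involutive σ) {α : F}
    (hα : σ α ≠ α) {G : Subgroup (GL n F)} (hG : SpansMatrices G) {x : GL n F}
    (hx : ∀ g ∈ G, GeneralLinearGroup.map σ (x * g * x⁻¹) = x * g * x⁻¹) {W : Matrix n n F}
    (hW : IsUnit W) (hGW : ∀ g ∈ G, (g : Matrix n n F)ᵀ * W * g = W) :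
    ∃ W' : Matrix n n F, IsUnit W' ∧ W'.map σ = W' ∧
      (∀ g ∈ G, ((x * g * x⁻¹ : GL n F) : Matrix n n F)ᵀ * W' * (x * g * x⁻¹ : GL n F) = W') ∧
      ∀ c : F, W'ᵀ = c • W' ↔ Wᵀ = c • W := by
  have hW₁ : ∀ g ∈ G, ((x * g * x⁻¹ : GL n F) : Matrix n n F)ᵀ *
      (((x⁻¹ : GL n F) : Matrix n n F)ᵀ * W * (x⁻¹ : GL n F)) * (x * g * x⁻¹ : GL n F) =
      ((x⁻¹ : GL n F) : Matrix n n F)ᵀ * W * (x⁻¹ : GL n F) := fun g hg => by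
    rw [Units.val_mul, Units.val_mul]
    exact Matrix.transpose_mul_mul_conj x.inv_mul (hGW g hg)
  have hW₁u : IsUnit (((x⁻¹ : GL n F) : Matrix n n F)ᵀ * W * (x⁻¹ : GL n F)) :=
    (((isUnit_transpose _).2 (x⁻¹).isUnit).mul hW).mul (x⁻¹).isUnit
  obtain ⟨e, he, heW⟩ := exists_ne_zero_smul_map_eq hσ hα (hG.map_conj x)
    (fun _ hh => by
      obtain ⟨g, hg, rfl⟩ := Subgroup.mem_map.1 hh
      exact congrArg Units.val (hx g hg))
    hW₁u (fun _ hh => by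
      obtain ⟨g, hg, rfl⟩ := Subgroup.mem_map.1 hh
      exact hW₁ g hg)
  exact ⟨_, (isUnit_smul_iff (Units.mk0 e he) _).2 hW₁u, heW,
    fun g hg => by rw [Matrix.mul_smul, Matrix.smul_mul, hW₁ g hg],
    Matrix.transpose_smul_congr_eq_smul_iff (x⁻¹).isUnit he⟩

end GaloisDescent

theorem stmt_12_general (F : Type*) [Field F] [Fintype F] (u N : ℕ)
    (hq : Fintype.card F = u ^ 2)
    (G : Subgroup (GL (Fin N) F))
    (W D : Matrix (Fin N) (Fin N) F)
    (hW : IsUnit W) (hD : IsUnit D)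
    (hGW : ∀ g ∈ G, ((g : Matrix (Fin N) (Fin N) F))ᵀ * W * (g : Matrix (Fin N) (Fin N) F) = W)
    (hGD : ∀ g ∈ G, (((g : Matrix (Fin N) (Fin N) F)).map (fun a => a ^ u))ᵀ * D *
      (g : Matrix (Fin N) (Fin N) F) = D)
    (hirr : Submodule.span F {m : Matrix (Fin N) (Fin N) F |
      ∃ g ∈ G, m = (g : Matrix (Fin N) (Fin N) F)} = ⊤) :
    ∃ (x : GL (Fin N) F) (W' : Matrix (Fin N) (Fin N) F),
      IsUnit W' ∧
      (∀ i j, (W' i j) ^ u = W' i j) ∧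
      (∀ g ∈ G, ∀ i j,
        (((x * g * x⁻¹ : GL (Fin N) F) : Matrix (Fin N) (Fin N) F) i j) ^ u =
          ((x * g * x⁻¹ : GL (Fin N) F) : Matrix (Fin N) (Fin N) F) i j) ∧
      (∀ g ∈ G,
        ((x * g * x⁻¹ : GL (Fin N) F) : Matrix (Fin N) (Fin N) F)ᵀ * W' *
          ((x * g * x⁻¹ : GL (Fin N) F) : Matrix (Fin N) (Fin N) F) = W') ∧
      (W'ᵀ = W' ↔ Wᵀ = W) ∧ (W'ᵀ = -W' ↔ Wᵀ = -W) := by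
  rcases isEmpty_or_nonempty (Fin N) with hN | hN
  · exact ⟨1, W, hW, fun i => isEmptyElim i, fun _ _ i => isEmptyElim i,
      fun _ _ => Subsingleton.elim _ _, Iff.rfl, Iff.rfl⟩
  obtain ⟨σ, hσ⟩ := FiniteField.exists_ringHom_eq_pow hq
  rw [← hσ] at hGD
  have hσ' (a : F) : σ a = a ^ u := congrFun hσ a
  have hσσ : Function.Involutive σ := fun a => by rw [hσ', hσ', FiniteField.pow_pow_eq_self hq]
  obtain ⟨α, hα⟩ : ∃ α, σ α ≠ α := by simpa [hσ'] using FiniteField.exists_pow_ne_self hq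
  have hnorm (c : F) (hc : c ≠ 0) (hcσ : σ c = c) : ∃ μ, σ μ * μ = c := by
    simpa [hσ'] using FiniteField.exists_pow_mul_self_eq hq hc ((hσ' c).symm.trans hcσ)
  have hWσ : IsUnit (W.map σ) := hW.map σ.mapMatrix
  obtain ⟨C, hC1, hC⟩ := exists_mul_map_eq_one_of_intertwines hσσ hnorm hirr
    ((isUnit_nonsing_inv_iff.2 hWσ).mul hD) fun g hg =>
      Matrix.inv_mul_mul_eq_mul_inv_mul hWσ (g.isUnit.map σ.mapMatrix)
        (by rw [← transpose_map, ← Matrix.map_mul, ← Matrix.map_mul, hGW g hg]) (hGD g hg)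
  obtain ⟨x, hx⟩ := exists_conj_map_eq_self hσσ hα hC1 hC
  obtain ⟨W', hW'u, hW'σ, hW', hW'c⟩ :=
    exists_map_eq_self_of_conj_map_eq_self hσσ hα hirr hx hW hGW
  refine ⟨x, W', hW'u, fun i j => ?_, fun g hg i j => ?_, hW', by simpa using hW'c 1,
    by simpa using hW'c (-1)⟩
  · rw [← hσ']
    exact congrFun₂ hW'σ i j
  · rw [← hσ', ← GeneralLinearGroup.map_apply, hx g hg]

/-- Let `F = 𝔽_q` with `q = u²`, let `W` be the (invertible) Gram matrix of a nondegenerate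
bilinear form `φ` on `F^N` and `D` the Gram matrix of a nondegenerate hermitian form `ψ`
(for the involution `x ↦ x^u`). If `G ≤ GL_N(F)` preserves both forms and acts absolutely
irreducibly (its elements span the full matrix algebra), then there are `x ∈ GL_N(F)` and an
invertible matrix `W'` with entries in the subfield `𝔽_u = {a | a^u = a}` such that `xGx⁻¹`
has entries in `𝔽_u` and preserves the bilinear form `W'`; moreover `W'` is symmetric iff
`W` is symmetric, and skew-symmetric iff `W` is skew-symmetric. -/
theorem stmt_12 (F : Type*) [Field F] [Fintype F] (u N : ℕ)
    (hq : Fintype.card F = u ^ 2)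
    (G : Subgroup (GL (Fin N) F))
    (W D : Matrix (Fin N) (Fin N) F)
    (hW : IsUnit W) (hD : IsUnit D)
    (hherm : (D.map (fun a => a ^ u))ᵀ = D)
    (hGW : ∀ g ∈ G, ((g : Matrix (Fin N) (Fin N) F))ᵀ * W * (g : Matrix (Fin N) (Fin N) F) = W)
    (hGD : ∀ g ∈ G, (((g : Matrix (Fin N) (Fin N) F)).map (fun a => a ^ u))ᵀ * D *
      (g : Matrix (Fin N) (Fin N) F) = D)
    (hirr : Submodule.span F {m : Matrix (Fin N) (Fin N) F |
      ∃ g ∈ G, m = (g : Matrix (Fin N) (Fin N) F)} = ⊤) :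
    ∃ (x : GL (Fin N) F) (W' : Matrix (Fin N) (Fin N) F),
      IsUnit W' ∧
      (∀ i j, (W' i j) ^ u = W' i j) ∧
      (∀ g ∈ G, ∀ i j,
        (((x * g * x⁻¹ : GL (Fin N) F) : Matrix (Fin N) (Fin N) F) i j) ^ u =
          ((x * g * x⁻¹ : GL (Fin N) F) : Matrix (Fin N) (Fin N) F) i j) ∧
      (∀ g ∈ G,
        ((x * g * x⁻¹ : GL (Fin N) F) : Matrix (Fin N) (Fin N) F)ᵀ * W' *
          ((x * g * x⁻¹ : GL (Fin N) F) : Matrix (Fin N) (Fin N) F) = W') ∧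
      (W'ᵀ = W' ↔ Wᵀ = W) ∧ (W'ᵀ = -W' ↔ Wᵀ = -W) :=
  stmt_12_general F u N hq G W D hW hD hGW hGD hirr
end

section
/- Let V_λ be the Hoefsmit representation space of the Hecke algebra H_n(α) for a partition λ of n, with basis the standard tableaux of shape λ ⊢ n (λ = λ' self-conjugate), over a field containing α with α of order > n. Define the bilinear form (𝕋₁|𝕋₂) = w(𝕋₁)·δ_{𝕋₂,𝕋₁'} where w(𝕋) = (−1)^{#{i<j : row_𝕋(i) > row_𝕋(j)}} and 𝕋' is the transposed tableau. Then this form is symmetric on V_λ if (n − b(λ))/2 is even and skew-symmetric if (n − b(λ))/2 is odd, where b(λ) is the number of diagonal boxes of λ; moreover the form is nondegenerate. -/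
open Classical

/-- A standard Young tableau of shape `μ` with `n = μ.card` boxes: a filling of the cells of
`μ` by the numbers `1, …, n`, bijectively, strictly increasing along rows and columns
(and `0` outside the diagram). -/
structure SYT (μ : YoungDiagram) where
  toFun : ℕ × ℕ → ℕ
  zero_of_not_mem : ∀ c : ℕ × ℕ, c ∉ μ → toFun c = 0
  bijOn : Set.BijOn toFun (μ.cells : Set (ℕ × ℕ)) (Set.Icc 1 μ.card)
  row_strict : ∀ i j1 j2 : ℕ, (i, j1) ∈ μ → (i, j2) ∈ μ → j1 < j2 →
    toFun (i, j1) < toFun (i, j2)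
  col_strict : ∀ i1 i2 j : ℕ, (i1, j) ∈ μ → (i2, j) ∈ μ → i1 < i2 →
    toFun (i1, j) < toFun (i2, j)

/-- The row in which the entry `k` lies in the standard tableau `T`. -/
noncomputable def SYT.rowOf {μ : YoungDiagram} (T : SYT μ) (k : ℕ) : ℕ :=
  (μ.cells.filter (fun c => T.toFun c = k)).sup Prod.fst

/-- The sign `w(𝕋) = (−1)^{#{i<j : row(i) > row(j)}}`. -/
noncomputable def SYT.w {μ : YoungDiagram} (F : Type*) [Field F] (T : SYT μ) : F :=
  (-1 : F) ^ (((Finset.Icc 1 μ.card) ×ˢ (Finset.Icc 1 μ.card)).filter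
    (fun p : ℕ × ℕ => p.1 < p.2 ∧ T.rowOf p.2 < T.rowOf p.1)).card

/-- The Gram coefficients of the bilinear form `(𝕋₁|𝕋₂) = w(𝕋₁) δ_{𝕋₂, 𝕋₁'}` on the span of
the standard tableaux of shape `μ`. -/
noncomputable def tableauForm {μ : YoungDiagram} (F : Type*) [Field F]
    (T₁ T₂ : SYT μ) : F :=
  if (∀ c : ℕ × ℕ, T₂.toFun c = T₁.toFun c.swap) then SYT.w F T₁ else 0

/-- The number of diagonal boxes `b(λ)` of a Young diagram. -/
noncomputable def diagLength (μ : YoungDiagram) : ℕ :=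
  (μ.cells.filter (fun c => c.1 = c.2)).card

namespace SYTAux

variable {μ : YoungDiagram}

lemma mem_swap_iff (hself : μ.transpose = μ) {c : ℕ × ℕ} : c.swap ∈ μ ↔ c ∈ μ := by
  rw [← YoungDiagram.mem_transpose, hself]

/-- Entries increase weakly-componentwise-strictly. -/
lemma mono (T : SYT μ) {c d : ℕ × ℕ} (hc : c ∈ μ) (hd : d ∈ μ)
    (h1 : c.1 ≤ d.1) (h2 : c.2 ≤ d.2) (hne : c ≠ d) : T.toFun c < T.toFun d := by
  obtain ⟨c1, c2⟩ := c
  obtain ⟨d1, d2⟩ := d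
  simp only at h1 h2
  rcases eq_or_lt_of_le h1 with rfl | h1'
  · have h2' : c2 < d2 := lt_of_le_of_ne h2 (by rintro rfl; exact hne rfl)
    exact T.row_strict c1 c2 d2 hc hd h2'
  · have hmid : (c1, d2) ∈ μ := μ.up_left_mem (le_of_lt h1') le_rfl hd
    have step2 : T.toFun (c1, d2) < T.toFun (d1, d2) := T.col_strict c1 d1 d2 hmid hd h1'
    rcases eq_or_lt_of_le h2 with rfl | h2'
    · exact step2
    · exact lt_trans (T.row_strict c1 c2 d2 hc hmid h2') step2

noncomputable def cellOf (T : SYT μ) (k : ℕ) : ℕ × ℕ :=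
  (μ.cells.filter (fun c => T.toFun c = k)).sup id

lemma filter_eq_singleton (T : SYT μ) {k : ℕ} {c : ℕ × ℕ} (hc : c ∈ μ.cells)
    (hk : T.toFun c = k) : μ.cells.filter (fun c => T.toFun c = k) = {c} := by
  ext d
  simp only [Finset.mem_filter, Finset.mem_singleton]
  constructor
  · rintro ⟨hd, hdk⟩
    exact T.bijOn.injOn (by exact_mod_cast hd) (by exact_mod_cast hc) (hdk.trans hk.symm)
  · rintro rfl; exact ⟨hc, hk⟩

lemma cellOf_eq (T : SYT μ) {k : ℕ} {c : ℕ × ℕ} (hc : c ∈ μ.cells)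
    (hk : T.toFun c = k) : cellOf T k = c := by
  rw [cellOf, filter_eq_singleton T hc hk, Finset.sup_singleton]
  rfl

lemma cell_spec (T : SYT μ) {k : ℕ} (hk : k ∈ Finset.Icc 1 μ.card) :
    cellOf T k ∈ μ.cells ∧ T.toFun (cellOf T k) = k := by
  have hk' : k ∈ Set.Icc 1 μ.card := by simpa [Finset.mem_Icc, Set.mem_Icc] using hk
  obtain ⟨c, hc, hck⟩ := T.bijOn.surjOn hk'
  have hc' : c ∈ μ.cells := by exact_mod_cast hc
  rw [cellOf_eq T hc' hck]
  exact ⟨hc', hck⟩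

lemma rowOf_eq (T : SYT μ) {k : ℕ} (hk : k ∈ Finset.Icc 1 μ.card) :
    T.rowOf k = (cellOf T k).1 := by
  obtain ⟨hc, hck⟩ := cell_spec T hk
  rw [SYT.rowOf, filter_eq_singleton T hc hck, Finset.sup_singleton]

noncomputable def transposeSYT (hself : μ.transpose = μ) (T : SYT μ) : SYT μ where
  toFun c := T.toFun c.swap
  zero_of_not_mem c hc := T.zero_of_not_mem c.swap (fun h => hc ((mem_swap_iff hself).mp h))
  bijOn := by
    have hswap : Set.BijOn Prod.swap (μ.cells : Set (ℕ × ℕ)) (μ.cells : Set (ℕ × ℕ)) := by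
      refine ⟨fun c hc => ?_, fun c _ d _ h => Prod.swap_injective h, fun c hc => ?_⟩
      · simp only [Finset.mem_coe, YoungDiagram.mem_cells] at hc ⊢
        exact (mem_swap_iff hself).mpr hc
      · refine ⟨c.swap, ?_, Prod.swap_swap c⟩
        simp only [Finset.mem_coe, YoungDiagram.mem_cells] at hc ⊢
        exact (mem_swap_iff hself).mpr hc
    exact T.bijOn.comp hswap
  row_strict i j1 j2 h1 h2 h :=
    T.col_strict j1 j2 i ((mem_swap_iff hself).mpr h1) ((mem_swap_iff hself).mpr h2) h
  col_strict i1 i2 j h1 h2 h :=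
    T.row_strict j i1 i2 ((mem_swap_iff hself).mpr h1) ((mem_swap_iff hself).mpr h2) h

lemma cellOf_transpose (hself : μ.transpose = μ) (T : SYT μ) {k : ℕ}
    (hk : k ∈ Finset.Icc 1 μ.card) :
    cellOf (transposeSYT hself T) k = (cellOf T k).swap := by
  obtain ⟨hc, hck⟩ := cell_spec T hk
  refine cellOf_eq _ ?_ ?_
  · simpa only [YoungDiagram.mem_cells] using
      (mem_swap_iff hself).mpr (by simpa only [YoungDiagram.mem_cells] using hc)
  · show T.toFun (cellOf T k).swap.swap = k
    rw [Prod.swap_swap]; exact hck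

lemma rowOf_transpose (hself : μ.transpose = μ) (T : SYT μ) {k : ℕ}
    (hk : k ∈ Finset.Icc 1 μ.card) :
    (transposeSYT hself T).rowOf k = (cellOf T k).2 := by
  rw [rowOf_eq _ hk, cellOf_transpose hself T hk]
  rfl

end SYTAux

namespace SYTAux

variable {μ : YoungDiagram}

/-- Card mod 2 equals the number of fixed points of an involution. -/
lemma card_modEq_fixed {α : Type*} (s : Finset α) (σ : α → α)
    [DecidablePred fun a => σ a = a] (hmem : ∀ a ∈ s, σ a ∈ s) (hinv : ∀ a ∈ s, σ (σ a) = a) :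
    (s.card : ZMod 2) = ((s.filter fun a => σ a = a).card : ZMod 2) := by
  classical
  have hsplit : (s.filter fun a => σ a = a).card + (s.filter fun a => ¬ σ a = a).card
      = s.card := Finset.card_filter_add_card_filter_not _
  set t := s.filter fun a => ¬ σ a = a with ht
  have htmem : ∀ a ∈ t, σ a ∈ t := by
    intro a ha
    rw [ht, Finset.mem_filter] at ha ⊢
    refine ⟨hmem a ha.1, ?_⟩
    intro h
    exact ha.2 (h.symm.trans (hinv a ha.1))
  have htzero : ((t.card : ZMod 2)) = 0 := by
    have hsum : ∑ _x ∈ t, (1 : ZMod 2) = 0 := by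
      refine Finset.sum_involution (fun a _ => σ a) (fun a ha => by decide)
        (fun a ha _ => (Finset.mem_filter.mp ha).2) (fun a ha => htmem a ha)
        (fun a ha => hinv a (Finset.mem_filter.mp ha).1)
    rw [Finset.card_eq_sum_ones]
    push_cast
    exact hsum
  have : (s.card : ZMod 2) = ((s.filter fun a => σ a = a).card : ZMod 2) + (t.card : ZMod 2) := by
    rw [← hsplit]; push_cast; ring
  rw [this, htzero, add_zero]

/-- The set of "incomparable ordered cell pairs" of the diagram. -/
noncomputable def incCells (μ : YoungDiagram) : Finset ((ℕ × ℕ) × (ℕ × ℕ)) :=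
  (μ.cells ×ˢ μ.cells).filter (fun q => q.1.1 < q.2.1 ∧ q.2.2 < q.1.2)

lemma card_incCells_modEq (hself : μ.transpose = μ) :
    ((incCells μ).card : ZMod 2) = (((μ.card - diagLength μ) / 2 : ℕ) : ZMod 2) := by
  classical
  set u : ℕ := (μ.cells.filter (fun c => c.1 < c.2)).card with hu
  set σ : (ℕ × ℕ) × (ℕ × ℕ) → (ℕ × ℕ) × (ℕ × ℕ) := fun q => (q.2.swap, q.1.swap) with hσ
  have h1 : ((incCells μ).card : ZMod 2)
      = (((incCells μ).filter fun q => σ q = q).card : ZMod 2) := by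
    refine card_modEq_fixed _ σ ?_ ?_
    · rintro ⟨⟨a1, a2⟩, b1, b2⟩ hq
      simp only [incCells, hσ, Finset.mem_filter, Finset.mem_product,
        YoungDiagram.mem_cells] at hq ⊢
      obtain ⟨⟨h1, h2⟩, h3, h4⟩ := hq
      exact ⟨⟨(mem_swap_iff hself).mpr h2, (mem_swap_iff hself).mpr h1⟩, h4, h3⟩
    · rintro ⟨⟨a1, a2⟩, b1, b2⟩ _
      simp [hσ]
  have h2 : ((incCells μ).filter fun q => σ q = q).card = u := by
    rw [hu]
    refine Finset.card_bij' (fun q _ => q.1) (fun c _ => (c, c.swap)) ?_ ?_ ?_ ?_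
    · rintro ⟨⟨a1, a2⟩, b1, b2⟩ hq
      simp only [incCells, hσ, Finset.mem_filter, Finset.mem_product, Prod.mk.injEq,
        Prod.swap_prod_mk] at hq
      obtain ⟨⟨⟨hm1, hm2⟩, hlt1, hlt2⟩, ⟨he1, he2⟩, he3, he4⟩ := hq
      simp only [Finset.mem_filter]
      exact ⟨hm1, by omega⟩
    · intro c hc
      simp only [Finset.mem_filter, YoungDiagram.mem_cells] at hc
      obtain ⟨hm, hlt⟩ := hc
      simp only [incCells, hσ, Finset.mem_filter, Finset.mem_product, Prod.mk.injEq,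
        Prod.swap_prod_mk, YoungDiagram.mem_cells, Prod.swap_swap]
      obtain ⟨c1, c2⟩ := c
      refine ⟨⟨⟨hm, (mem_swap_iff hself).mpr hm⟩, ?_, ?_⟩, ?_⟩ <;> simp_all
    · rintro ⟨⟨a1, a2⟩, b1, b2⟩ hq
      simp only [incCells, hσ, Finset.mem_filter, Finset.mem_product, Prod.mk.injEq,
        Prod.swap_prod_mk] at hq
      obtain ⟨_, ⟨he1, he2⟩, he3, he4⟩ := hq
      simp only [Prod.mk.injEq, Prod.swap_prod_mk]
      exact ⟨trivial, he3, he4⟩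
    · intro c _
      rfl
  have h3 : (μ.card - diagLength μ) / 2 = u := by
    have hsplit : diagLength μ + (μ.cells.filter fun c => ¬ c.1 = c.2).card = μ.card :=
      Finset.card_filter_add_card_filter_not _
    have hor : (μ.cells.filter fun c => ¬ c.1 = c.2)
        = (μ.cells.filter fun c => c.1 < c.2) ∪ (μ.cells.filter fun c => c.2 < c.1) := by
      rw [← Finset.filter_or]
      exact Finset.filter_congr (fun c _ => by omega)
    have hdisj : Disjoint (μ.cells.filter fun c => c.1 < c.2)
        (μ.cells.filter fun c => c.2 < c.1) := by
      rw [Finset.disjoint_left]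
      intro c h1 h2
      simp only [Finset.mem_filter] at h1 h2
      omega
    have hBA : (μ.cells.filter fun c => c.2 < c.1).card = u := by
      rw [hu]
      refine Finset.card_bij' (fun c _ => c.swap) (fun c _ => c.swap) ?_ ?_ ?_ ?_
      · intro c hc
        simp only [Finset.mem_filter, YoungDiagram.mem_cells] at hc ⊢
        exact ⟨(mem_swap_iff hself).mpr hc.1, hc.2⟩
      · intro c hc
        simp only [Finset.mem_filter, YoungDiagram.mem_cells] at hc ⊢
        exact ⟨(mem_swap_iff hself).mpr hc.1, hc.2⟩
      · intro c _; exact Prod.swap_swap c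
      · intro c _; exact Prod.swap_swap c
    have hcard : (μ.cells.filter fun c => ¬ c.1 = c.2).card = u + u := by
      rw [hor, Finset.card_union_of_disjoint hdisj, hBA, hu]
    omega
  rw [h1, h2, h3]

end SYTAux

namespace SYTAux

variable {μ : YoungDiagram}

lemma w_congr (F : Type*) [Field F] (T₂ T₃ : SYT μ) (h : ∀ c, T₂.toFun c = T₃.toFun c) :
    SYT.w F T₂ = SYT.w F T₃ := by
  have hrow : T₂.rowOf = T₃.rowOf := by
    funext k
    rw [SYT.rowOf, SYT.rowOf]
    congr 1
    exact Finset.filter_congr (fun c _ => by rw [h c])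
  rw [SYT.w, SYT.w, hrow]

lemma w_key (F : Type*) [Field F] (hself : μ.transpose = μ) (T : SYT μ) :
    SYT.w F T * SYT.w F (transposeSYT hself T) =
      (-1 : F) ^ ((μ.card - diagLength μ) / 2) := by
  classical
  set B := Finset.Icc 1 μ.card ×ˢ Finset.Icc 1 μ.card with hB
  have hmemIcc : ∀ p : ℕ × ℕ, p ∈ B →
      p.1 ∈ Finset.Icc 1 μ.card ∧ p.2 ∈ Finset.Icc 1 μ.card :=
    fun p hp => Finset.mem_product.mp hp
  -- a key non-domination fact
  have hnotboth : ∀ a b : ℕ, a ∈ Finset.Icc 1 μ.card → b ∈ Finset.Icc 1 μ.card → a < b →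
      ¬((cellOf T b).1 ≤ (cellOf T a).1 ∧ (cellOf T b).2 ≤ (cellOf T a).2) := by
    rintro a b ha hb hab ⟨k1, k2⟩
    obtain ⟨hca, hTa⟩ := cell_spec T ha
    obtain ⟨hcb, hTb⟩ := cell_spec T hb
    have hne : cellOf T b ≠ cellOf T a := by
      intro h
      rw [h, hTa] at hTb
      omega
    have := mono T (by simpa only [YoungDiagram.mem_cells] using hcb)
      (by simpa only [YoungDiagram.mem_cells] using hca) k1 k2 hne
    rw [hTa, hTb] at this
    omega
  -- the two inversion sets, rewritten via cells
  have hSeq : (B.filter (fun p : ℕ × ℕ => p.1 < p.2 ∧ T.rowOf p.2 < T.rowOf p.1))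
      = B.filter (fun p => p.1 < p.2 ∧ (cellOf T p.2).1 < (cellOf T p.1).1) := by
    apply Finset.filter_congr
    intro p hp
    obtain ⟨h1, h2⟩ := hmemIcc p hp
    rw [rowOf_eq T h1, rowOf_eq T h2]
  have hS'eq : (B.filter (fun p : ℕ × ℕ =>
        p.1 < p.2 ∧ (transposeSYT hself T).rowOf p.2 < (transposeSYT hself T).rowOf p.1))
      = B.filter (fun p => p.1 < p.2 ∧ (cellOf T p.2).2 < (cellOf T p.1).2) := by
    apply Finset.filter_congr
    intro p hp
    obtain ⟨h1, h2⟩ := hmemIcc p hp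
    rw [rowOf_transpose hself T h1, rowOf_transpose hself T h2]
  set SC := B.filter (fun p => p.1 < p.2 ∧ (cellOf T p.2).1 < (cellOf T p.1).1) with hSC
  set S'C := B.filter (fun p => p.1 < p.2 ∧ (cellOf T p.2).2 < (cellOf T p.1).2) with hS'C
  set U := B.filter (fun p => p.1 < p.2 ∧
      ((cellOf T p.2).1 < (cellOf T p.1).1 ∨ (cellOf T p.2).2 < (cellOf T p.1).2)) with hU
  have hdisj : Disjoint SC S'C := by
    rw [Finset.disjoint_left]
    intro p hp1 hp2
    rw [hSC, Finset.mem_filter] at hp1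
    rw [hS'C, Finset.mem_filter] at hp2
    obtain ⟨hpB, hlt, hA⟩ := hp1
    obtain ⟨_, _, hBc⟩ := hp2
    obtain ⟨h1, h2⟩ := hmemIcc p hpB
    exact hnotboth p.1 p.2 h1 h2 hlt ⟨le_of_lt hA, le_of_lt hBc⟩
  have hunion : SC ∪ S'C = U := by
    rw [hSC, hS'C, hU, ← Finset.filter_or]
    apply Finset.filter_congr
    intro p _
    tauto
  -- the bijection between U and incCells μ
  have hUcard : U.card = (incCells μ).card := by
    refine Finset.card_bij'
      (fun p _ => if (cellOf T p.2).1 < (cellOf T p.1).1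
        then (cellOf T p.2, cellOf T p.1) else (cellOf T p.1, cellOf T p.2))
      (fun q _ => if T.toFun q.1 < T.toFun q.2
        then (T.toFun q.1, T.toFun q.2) else (T.toFun q.2, T.toFun q.1)) ?_ ?_ ?_ ?_
    · intro p hp
      rw [hU, Finset.mem_filter] at hp
      obtain ⟨hpB, hlt, hor⟩ := hp
      obtain ⟨h1, h2⟩ := hmemIcc p hpB
      obtain ⟨hc1, hT1⟩ := cell_spec T h1
      obtain ⟨hc2, hT2⟩ := cell_spec T h2
      have hnb := hnotboth p.1 p.2 h1 h2 hlt
      by_cases h : (cellOf T p.2).1 < (cellOf T p.1).1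
      · rw [if_pos h]
        rw [incCells, Finset.mem_filter, Finset.mem_product]
        refine ⟨⟨hc2, hc1⟩, h, ?_⟩
        dsimp only
        omega
      · rw [if_neg h]
        rw [incCells, Finset.mem_filter, Finset.mem_product]
        have hB2 : (cellOf T p.2).2 < (cellOf T p.1).2 := by tauto
        refine ⟨⟨hc1, hc2⟩, ?_, hB2⟩
        dsimp only
        omega
    · intro q hq
      rw [incCells, Finset.mem_filter, Finset.mem_product] at hq
      obtain ⟨⟨ha, hb⟩, hq1, hq2⟩ := hq
      have hTa : T.toFun q.1 ∈ Finset.Icc 1 μ.card := by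
        have := T.bijOn.mapsTo (by exact_mod_cast ha)
        simpa [Finset.mem_Icc, Set.mem_Icc] using this
      have hTb : T.toFun q.2 ∈ Finset.Icc 1 μ.card := by
        have := T.bijOn.mapsTo (by exact_mod_cast hb)
        simpa [Finset.mem_Icc, Set.mem_Icc] using this
      have hne : T.toFun q.1 ≠ T.toFun q.2 := by
        intro h
        have := T.bijOn.injOn (by exact_mod_cast ha) (by exact_mod_cast hb) h
        rw [this] at hq1
        omega
      have hca : cellOf T (T.toFun q.1) = q.1 := cellOf_eq T ha rfl
      have hcb : cellOf T (T.toFun q.2) = q.2 := cellOf_eq T hb rfl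
      by_cases h : T.toFun q.1 < T.toFun q.2
      · rw [if_pos h, hU, Finset.mem_filter, Finset.mem_product]
        refine ⟨⟨hTa, hTb⟩, h, ?_⟩
        show (cellOf T (T.toFun q.2)).1 < (cellOf T (T.toFun q.1)).1 ∨
          (cellOf T (T.toFun q.2)).2 < (cellOf T (T.toFun q.1)).2
        rw [hca, hcb]
        exact Or.inr hq2
      · rw [if_neg h, hU, Finset.mem_filter, Finset.mem_product]
        refine ⟨⟨hTb, hTa⟩, by omega, ?_⟩
        show (cellOf T (T.toFun q.1)).1 < (cellOf T (T.toFun q.2)).1 ∨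
          (cellOf T (T.toFun q.1)).2 < (cellOf T (T.toFun q.2)).2
        rw [hca, hcb]
        exact Or.inl hq1
    · intro p hp
      rw [hU, Finset.mem_filter] at hp
      obtain ⟨hpB, hlt, hor⟩ := hp
      obtain ⟨h1, h2⟩ := hmemIcc p hpB
      obtain ⟨hc1, hT1⟩ := cell_spec T h1
      obtain ⟨hc2, hT2⟩ := cell_spec T h2
      by_cases h : (cellOf T p.2).1 < (cellOf T p.1).1
      · rw [if_pos h]
        dsimp only
        have : ¬ T.toFun (cellOf T p.2) < T.toFun (cellOf T p.1) := by
          rw [hT1, hT2]; omega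
        rw [if_neg this, hT1, hT2]
      · rw [if_neg h]
        dsimp only
        have : T.toFun (cellOf T p.1) < T.toFun (cellOf T p.2) := by
          rw [hT1, hT2]; omega
        rw [if_pos this, hT1, hT2]
    · intro q hq
      rw [incCells, Finset.mem_filter, Finset.mem_product] at hq
      obtain ⟨⟨ha, hb⟩, hq1, hq2⟩ := hq
      have hca : cellOf T (T.toFun q.1) = q.1 := cellOf_eq T ha rfl
      have hcb : cellOf T (T.toFun q.2) = q.2 := cellOf_eq T hb rfl
      by_cases h : T.toFun q.1 < T.toFun q.2
      · rw [if_pos h]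
        dsimp only
        have : ¬ (cellOf T (T.toFun q.2)).1 < (cellOf T (T.toFun q.1)).1 := by
          rw [hca, hcb]; omega
        rw [if_neg this, hca, hcb]
      · rw [if_neg h]
        dsimp only
        have : (cellOf T (T.toFun q.1)).1 < (cellOf T (T.toFun q.2)).1 := by
          rw [hca, hcb]; omega
        rw [if_pos this, hca, hcb]
  -- putting it together
  rw [SYT.w, SYT.w, ← pow_add, ← hB, hSeq, hS'eq]
  have hsum : SC.card + S'C.card = (incCells μ).card := by
    rw [← hUcard, ← hunion, Finset.card_union_of_disjoint hdisj]
  rw [hsum]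
  have hmod : (((incCells μ).card : ℕ) : ZMod 2)
      = (((μ.card - diagLength μ) / 2 : ℕ) : ZMod 2) := card_incCells_modEq hself
  rw [ZMod.natCast_eq_natCast_iff'] at hmod
  rw [neg_one_pow_eq_pow_mod_two, hmod, ← neg_one_pow_eq_pow_mod_two]

end SYTAux

/-- For a self-conjugate partition `λ = λ'` of `n` (and `α` of order `> n` in `𝔽_qˣ`, which
is irrelevant for this purely combinatorial statement but kept from the source), the bilinear
form `(𝕋₁|𝕋₂) = w(𝕋₁) δ_{𝕋₂,𝕋₁'}` on the Hoefsmit representation space `V_λ` is symmetric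
if `(n − b(λ))/2` is even, skew-symmetric if `(n − b(λ))/2` is odd, and nondegenerate. -/
theorem stmt_16 (F : Type*) [Field F] (α : Fˣ) (μ : YoungDiagram)
    (hself : μ.transpose = μ)
    (horder : ∀ k : ℕ, 0 < k → k ≤ μ.card → (α : F) ^ k ≠ 1) :
    ((Even ((μ.card - diagLength μ) / 2) →
        ∀ T₁ T₂ : SYT μ, tableauForm F T₁ T₂ = tableauForm F T₂ T₁) ∧
     (¬ Even ((μ.card - diagLength μ) / 2) →
        ∀ T₁ T₂ : SYT μ, tableauForm F T₁ T₂ = - tableauForm F T₂ T₁)) ∧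
    (∀ T₁ : SYT μ, ∃ T₂ : SYT μ, tableauForm F T₁ T₂ ≠ 0) := by
  classical
  have hsq : ∀ T : SYT μ, SYT.w F T * SYT.w F T = 1 := by
    intro T
    rw [SYT.w, ← pow_add]
    exact Even.neg_one_pow ⟨_, rfl⟩
  have hε : ∀ T : SYT μ, SYT.w F T
      = (-1 : F) ^ ((μ.card - diagLength μ) / 2) * SYT.w F (SYTAux.transposeSYT hself T) := by
    intro T
    have hk := SYTAux.w_key F hself T
    have h1 : SYT.w F T * (SYT.w F (SYTAux.transposeSYT hself T)
        * SYT.w F (SYTAux.transposeSYT hself T)) = SYT.w F T := by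
      rw [hsq, mul_one]
    rw [← h1, ← mul_assoc, hk]
  have hcond : ∀ T₁ T₂ : SYT μ, (∀ c : ℕ × ℕ, T₂.toFun c = T₁.toFun c.swap) →
      (∀ c : ℕ × ℕ, T₁.toFun c = T₂.toFun c.swap) := by
    intro T₁ T₂ h c
    rw [h c.swap, Prod.swap_swap]
  have hwcong : ∀ T₁ T₂ : SYT μ, (∀ c : ℕ × ℕ, T₂.toFun c = T₁.toFun c.swap) →
      SYT.w F T₂ = SYT.w F (SYTAux.transposeSYT hself T₁) :=
    fun T₁ T₂ h => SYTAux.w_congr F T₂ _ (fun c => h c)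
  refine ⟨⟨?_, ?_⟩, ?_⟩
  · intro hev T₁ T₂
    rw [tableauForm, tableauForm]
    by_cases h : ∀ c : ℕ × ℕ, T₂.toFun c = T₁.toFun c.swap
    · rw [if_pos h, if_pos (hcond T₁ T₂ h)]
      rw [hε T₁, ← hwcong T₁ T₂ h, Even.neg_one_pow hev, one_mul]
    · have h' : ¬ ∀ c : ℕ × ℕ, T₁.toFun c = T₂.toFun c.swap := fun h' => h (hcond T₂ T₁ h')
      rw [if_neg h, if_neg h']
  · intro hodd T₁ T₂
    rw [tableauForm, tableauForm]
    by_cases h : ∀ c : ℕ × ℕ, T₂.toFun c = T₁.toFun c.swap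
    · rw [if_pos h, if_pos (hcond T₁ T₂ h)]
      rw [hε T₁, ← hwcong T₁ T₂ h, Odd.neg_one_pow (Nat.not_even_iff_odd.mp hodd), neg_one_mul]
    · have h' : ¬ ∀ c : ℕ × ℕ, T₁.toFun c = T₂.toFun c.swap := fun h' => h (hcond T₂ T₁ h')
      rw [if_neg h, if_neg h', neg_zero]
  · intro T₁
    refine ⟨SYTAux.transposeSYT hself T₁, ?_⟩
    have hc : ∀ c : ℕ × ℕ, (SYTAux.transposeSYT hself T₁).toFun c = T₁.toFun c.swap :=
      fun c => rfl
    rw [tableauForm, if_pos hc]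
    rw [SYT.w]
    exact pow_ne_zero _ (by norm_num)
end
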